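/- arXiv:1507.00975 — 9 statements merged into one kernel-verified Lean document; each statement's English description precedes it below -/
import Mathlib

section
/- Let x* = −G·(b₁; b₂). Then x* is feasible for the linear equality constraint, i.e., B·x* + b₂ = 0. -/
/-! With `y = M⁻¹ (Aᵀ b₁; b₂)`, the vector `x*` is `-y₁`, and the second block row of
`M y = (Aᵀ b₁; b₂)` reads `B y₁ = b₂`. -/

open Matrix

section BlockMulVec

variable {m n o α : Type*} [Fintype n] [CommRing α]

theorem fromCols_one_zero_mulVec [Fintype m] [DecidableEq m] (v : m ⊕ n → α) :
    fromCols (1 : Matrix m m α) (0 : Matrix m n α) *ᵥ v = v ∘ Sum.inl := by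
  rw [← Sum.elim_comp_inl_inr v, fromCols_mulVec_sumElim]
  simp

theorem fromBlocks_one_mulVec_sumElim [Fintype o] [DecidableEq n] (P : Matrix m o α) (v : o → α)
    (w : n → α) :
    fromBlocks P 0 0 (1 : Matrix n n α) *ᵥ Sum.elim v w = Sum.elim (P *ᵥ v) w := by
  simp [fromBlocks_mulVec]

theorem mulVec_comp_inl_of_fromBlocks_zero_mulVec_eq [Fintype m] {P : Matrix m m α}
    {Q : Matrix m n α} {R : Matrix n m α} {y : m ⊕ n → α} {c : m → α} {d : n → α}
    (h : fromBlocks P Q R 0 *ᵥ y = Sum.elim c d) : R *ᵥ (y ∘ Sum.inl) = d := by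
  simpa [fromBlocks_mulVec] using congrArg (· ∘ Sum.inr) h

theorem constraint_of_saddlePoint_solution [Fintype m] [DecidableEq m] [DecidableEq n]
    {M : Matrix (m ⊕ n) (m ⊕ n) α} {P : Matrix m m α} {Q : Matrix m n α} {R : Matrix n m α}
    (hM : M = fromBlocks P Q R 0) (hMinv : IsUnit M) (c : m → α) (d : n → α) :
    R *ᵥ ((M⁻¹ *ᵥ Sum.elim c d) ∘ Sum.inl) = d := by
  refine mulVec_comp_inl_of_fromBlocks_zero_mulVec_eq (P := P) (Q := Q) (c := c) ?_
  rw [← hM, mulVec_mulVec, mul_nonsing_inv _ ((isUnit_iff_isUnit_det M).mp hMinv), one_mulVec]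

end BlockMulVec

theorem feasibility_of_condensed_solution_general
    (n N r : ℕ)
    (A : Matrix (Fin N) (Fin n) ℝ) (B : Matrix (Fin r) (Fin n) ℝ)
    (M : Matrix (Fin n ⊕ Fin r) (Fin n ⊕ Fin r) ℝ)
    (hM : M = Matrix.fromBlocks (Aᵀ * A) Bᵀ B 0)
    (hMinv : IsUnit M)
    (G : Matrix (Fin n) (Fin N ⊕ Fin r) ℝ)
    (hG : G = Matrix.fromCols (1 : Matrix (Fin n) (Fin n) ℝ) (0 : Matrix (Fin n) (Fin r) ℝ) * M⁻¹ *
        Matrix.fromBlocks Aᵀ 0 0 (1 : Matrix (Fin r) (Fin r) ℝ))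
    (b₁ : Fin N → ℝ) (b₂ : Fin r → ℝ)
    (xstar : Fin n → ℝ) (hx : xstar = -(G.mulVec (Sum.elim b₁ b₂))) :
    B.mulVec xstar + b₂ = 0 := by
  have hxstar : xstar = -((M⁻¹ *ᵥ Sum.elim (Aᵀ *ᵥ b₁) b₂) ∘ Sum.inl) := by
    rw [hx, hG, ← mulVec_mulVec, ← mulVec_mulVec, fromBlocks_one_mulVec_sumElim,
      fromCols_one_zero_mulVec]
  rw [hxstar, mulVec_neg, constraint_of_saddlePoint_solution hM hMinv, neg_add_cancel]

/-- Feasibility of the constrained least-squares solution `x* = -G·(b₁; b₂)`: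
it satisfies the linear equality constraint `B·x* + b₂ = 0`. -/
theorem feasibility_of_condensed_solution
    (n N r : ℕ) (hn : 0 < n) (hN : 0 < N) (hr : 0 < r)
    (A : Matrix (Fin N) (Fin n) ℝ) (B : Matrix (Fin r) (Fin n) ℝ)
    (M : Matrix (Fin n ⊕ Fin r) (Fin n ⊕ Fin r) ℝ)
    (hM : M = Matrix.fromBlocks (Aᵀ * A) Bᵀ B 0)
    (hMinv : IsUnit M)
    (G : Matrix (Fin n) (Fin N ⊕ Fin r) ℝ)
    (hG : G = Matrix.fromCols (1 : Matrix (Fin n) (Fin n) ℝ) (0 : Matrix (Fin n) (Fin r) ℝ) * M⁻¹ *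
        Matrix.fromBlocks Aᵀ 0 0 (1 : Matrix (Fin r) (Fin r) ℝ))
    (b₁ : Fin N → ℝ) (b₂ : Fin r → ℝ)
    (xstar : Fin n → ℝ) (hx : xstar = -(G.mulVec (Sum.elim b₁ b₂))) :
    B.mulVec xstar + b₂ = 0 :=
  feasibility_of_condensed_solution_general n N r A B M hM hMinv G hG b₁ b₂ xstar hx
end

section
/- Let x* = −G·(b₁; b₂), and let x ∈ ℝⁿ be feasible (B·x + b₂ = 0) with ‖b₁ + A·x‖₂ = ‖b₁ + A·x*‖₂. Then x = x*; that is, x* is the unique minimizer of ‖b₁ + A·x‖₂ over the feasible set. -/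
/-!
Write `M⁻¹ (Aᵀb₁; b₂) = (u; μ)`, so that `x* = -u`. The block equations of `M` say that `x*` is a
KKT point: `B x* + b₂ = 0` and `Aᵀ(b₁ + A x*) = Bᵀ μ`. For a feasible `x` put `d = x - x*`; then
`B d = 0`, so the residual `b₁ + A x*` is orthogonal to `A d` and
`‖b₁ + A x‖² = ‖b₁ + A x*‖² + ‖A d‖²`. Equal norms force `A d = 0`, hence `M (d; 0) = 0`, and
invertibility of `M` gives `d = 0`.
-/

open Matrix

variable {m n p : Type*} [Fintype m] [Fintype n] [Fintype p]

lemma EuclideanSpace.norm_equiv_symm_sq (v : m → ℝ) :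
    ‖(EuclideanSpace.equiv m ℝ).symm v‖ ^ 2 = v ⬝ᵥ v := by
  rw [← real_inner_self_eq_norm_sq, EuclideanSpace.inner_eq_star_dotProduct]
  simp [EuclideanSpace.equiv]

lemma Matrix.fromBlocks_zero₂₂_mulVec_sumElim {R : Type*} [NonUnitalNonAssocSemiring R]
    (P : Matrix n n R) (Q : Matrix n p R) (S : Matrix p n R) (u : n → R) (v : p → R) :
    fromBlocks P Q S 0 *ᵥ (u ⊕ᵥ v) = (P *ᵥ u + Q *ᵥ v) ⊕ᵥ (S *ᵥ u) := by
  simp [fromBlocks_mulVec]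

lemma Matrix.fromCols_one_zero_mul_mul_fromBlocks_mulVec_sumElim {R : Type*} [CommRing R]
    [DecidableEq n] [DecidableEq p] (C : Matrix (n ⊕ p) (n ⊕ p) R) (A : Matrix m n R)
    (b₁ : m → R) (b₂ : p → R) :
    ((fromCols (1 : Matrix n n R) 0 : Matrix n (n ⊕ p) R) * C *
        fromBlocks Aᵀ 0 0 (1 : Matrix p p R) : Matrix n (m ⊕ p) R) *ᵥ (b₁ ⊕ᵥ b₂) =
      (C *ᵥ (Aᵀ *ᵥ b₁ ⊕ᵥ b₂)) ∘ Sum.inl := by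
  rw [← mulVec_mulVec, ← mulVec_mulVec, fromBlocks_mulVec, fromCols_mulVec]
  simp

section LeastSquares

variable (A : Matrix m n ℝ) (B : Matrix p n ℝ)

lemma kkt_of_fromBlocks_mulVec_eq {b₁ : m → ℝ} {b₂ : p → ℝ} {u : n → ℝ} {μ : p → ℝ}
    (h : fromBlocks (Aᵀ * A) Bᵀ B 0 *ᵥ (u ⊕ᵥ μ) = Aᵀ *ᵥ b₁ ⊕ᵥ b₂) :
    Aᵀ *ᵥ (b₁ + A *ᵥ -u) = Bᵀ *ᵥ μ ∧ B *ᵥ -u + b₂ = 0 := by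
  rw [fromBlocks_zero₂₂_mulVec_sumElim] at h
  obtain ⟨hstat, hfeas⟩ : (Aᵀ * A) *ᵥ u + Bᵀ *ᵥ μ = Aᵀ *ᵥ b₁ ∧ B *ᵥ u = b₂ :=
    ⟨funext fun i => congrFun h (.inl i), funext fun i => congrFun h (.inr i)⟩
  constructor
  · rw [mulVec_add, mulVec_neg, mulVec_neg, mulVec_mulVec, ← hstat]
    abel
  · rw [mulVec_neg, hfeas, neg_add_cancel]

lemma residual_dotProduct_self_add {w : m → ℝ} {μ : p → ℝ} {d : n → ℝ}
    (hw : Aᵀ *ᵥ w = Bᵀ *ᵥ μ) (hd : B *ᵥ d = 0) :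
    (w + A *ᵥ d) ⬝ᵥ (w + A *ᵥ d) = w ⬝ᵥ w + A *ᵥ d ⬝ᵥ A *ᵥ d := by
  have hcross : w ⬝ᵥ A *ᵥ d = 0 := by
    rw [dotProduct_mulVec, ← mulVec_transpose, hw, mulVec_transpose, ← dotProduct_mulVec, hd,
      dotProduct_zero]
  rw [add_dotProduct, dotProduct_add, dotProduct_add, hcross, dotProduct_comm (A *ᵥ d), hcross]
  ring

lemma eq_zero_of_isUnit_fromBlocks [DecidableEq n] [DecidableEq p] (C : Matrix n p ℝ)
    (hM : IsUnit (fromBlocks (Aᵀ * A) C B 0)) {d : n → ℝ} (hA : A *ᵥ d = 0) (hB : B *ᵥ d = 0) :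
    d = 0 := by
  have hMd : fromBlocks (Aᵀ * A) C B 0 *ᵥ (d ⊕ᵥ 0) = fromBlocks (Aᵀ * A) C B 0 *ᵥ 0 := by
    rw [fromBlocks_zero₂₂_mulVec_sumElim, ← mulVec_mulVec, hA, hB]
    simp
  exact funext fun i => congrFun (mulVec_injective_iff_isUnit.mpr hM hMd) (.inl i)

end LeastSquares

theorem uniqueness_of_condensed_solution_general
    (n N r : ℕ)
    (A : Matrix (Fin N) (Fin n) ℝ) (B : Matrix (Fin r) (Fin n) ℝ)
    (M : Matrix (Fin n ⊕ Fin r) (Fin n ⊕ Fin r) ℝ)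
    (hM : M = Matrix.fromBlocks (Aᵀ * A) Bᵀ B 0)
    (hMinv : IsUnit M)
    (G : Matrix (Fin n) (Fin N ⊕ Fin r) ℝ)
    (hG : G = (Matrix.fromCols (1 : Matrix (Fin n) (Fin n) ℝ) 0 : Matrix (Fin n) (Fin n ⊕ Fin r) ℝ) * M⁻¹ *
        Matrix.fromBlocks Aᵀ 0 0 (1 : Matrix (Fin r) (Fin r) ℝ))
    (b₁ : Fin N → ℝ) (b₂ : Fin r → ℝ)
    (xstar : Fin n → ℝ) (hx : xstar = -(G.mulVec (Sum.elim b₁ b₂))) :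
    ∀ x : Fin n → ℝ, B.mulVec x + b₂ = 0 →
      ‖(EuclideanSpace.equiv (Fin N) ℝ).symm (b₁ + A.mulVec x)‖ =
        ‖(EuclideanSpace.equiv (Fin N) ℝ).symm (b₁ + A.mulVec xstar)‖ →
      x = xstar := by
  intro x hfeas hnorm
  set y := M⁻¹ *ᵥ (Aᵀ *ᵥ b₁ ⊕ᵥ b₂)
  have hMy : M *ᵥ ((y ∘ Sum.inl) ⊕ᵥ (y ∘ Sum.inr)) = Aᵀ *ᵥ b₁ ⊕ᵥ b₂ := by
    rw [Sum.elim_comp_inl_inr, mulVec_mulVec,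
      mul_nonsing_inv M ((isUnit_iff_isUnit_det M).mp hMinv), one_mulVec]
  have hxstar : xstar = -(y ∘ Sum.inl) := by
    rw [hx, hG, fromCols_one_zero_mul_mul_fromBlocks_mulVec_sumElim]
  subst hxstar
  obtain ⟨hstat, hfeas_star⟩ := kkt_of_fromBlocks_mulVec_eq A B (hM ▸ hMy)
  have hBd : B *ᵥ (x - -(y ∘ Sum.inl)) = 0 := by
    rw [mulVec_sub, ← add_sub_add_right_eq_sub _ _ b₂, hfeas, hfeas_star, sub_zero]
  have hAd : A *ᵥ (x - -(y ∘ Sum.inl)) = 0 := by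
    have hsq := congrArg (· ^ 2) hnorm
    simp only [EuclideanSpace.norm_equiv_symm_sq] at hsq
    rw [← add_sub_cancel (-(y ∘ Sum.inl)) x, mulVec_add, ← add_assoc,
      residual_dotProduct_self_add A B hstat hBd] at hsq
    exact dotProduct_self_eq_zero.mp (by linarith)
  exact sub_eq_zero.mp (eq_zero_of_isUnit_fromBlocks A B Bᵀ (hM ▸ hMinv) hAd hBd)

/-- Uniqueness of the minimizer `x* = -G·(b₁; b₂)` of the linearly constrained
least-squares problem: any feasible `x` (i.e. `B·x + b₂ = 0`) attaining the same
residual norm `‖b₁ + A·x‖₂ = ‖b₁ + A·x*‖₂` must equal `x*`. -/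
theorem uniqueness_of_condensed_solution
    (n N r : ℕ) (hn : 0 < n) (hN : 0 < N) (hr : 0 < r)
    (A : Matrix (Fin N) (Fin n) ℝ) (B : Matrix (Fin r) (Fin n) ℝ)
    (M : Matrix (Fin n ⊕ Fin r) (Fin n ⊕ Fin r) ℝ)
    (hM : M = Matrix.fromBlocks (Aᵀ * A) Bᵀ B 0)
    (hMinv : IsUnit M)
    (G : Matrix (Fin n) (Fin N ⊕ Fin r) ℝ)
    (hG : G = (Matrix.fromCols (1 : Matrix (Fin n) (Fin n) ℝ) 0 : Matrix (Fin n) (Fin n ⊕ Fin r) ℝ) * M⁻¹ *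
        Matrix.fromBlocks Aᵀ 0 0 (1 : Matrix (Fin r) (Fin r) ℝ))
    (b₁ : Fin N → ℝ) (b₂ : Fin r → ℝ)
    (xstar : Fin n → ℝ) (hx : xstar = -(G.mulVec (Sum.elim b₁ b₂))) :
    ∀ x : Fin n → ℝ, B.mulVec x + b₂ = 0 →
      ‖(EuclideanSpace.equiv (Fin N) ℝ).symm (b₁ + A.mulVec x)‖ =
        ‖(EuclideanSpace.equiv (Fin N) ℝ).symm (b₁ + A.mulVec xstar)‖ →
      x = xstar :=
  uniqueness_of_condensed_solution_general n N r A B M hM hMinv G hG b₁ b₂ xstar hx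
end

section
/- Let J denote the (N+r)×n matrix obtained by stacking A on top of B. Then G·J = Iₙ (G is a left inverse of J), and consequently G is a generalized inverse of J, i.e., G·J·G = G. -/
/-!
The saddle-point matrix `M = [AᵀA, Bᵀ; B, 0]` maps the block column `[Iₙ; 0]` to
`[AᵀA; B] = diag(Aᵀ, Iᵣ) · J`. Applying `M⁻¹` gives `M⁻¹ · diag(Aᵀ, Iᵣ) · J = [Iₙ; 0]`, whose
top block is `G · J`.
-/

open Matrix

namespace Matrix

variable {R : Type*} {l m n r : Type*}

theorem fromBlocks_mul_fromRows_one_zero [Fintype n] [Fintype r] [DecidableEq n] [Semiring R]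
    (P : Matrix m n R) (Q : Matrix m r R) (C : Matrix l n R) (D : Matrix l r R) :
    fromBlocks P Q C D * fromRows (1 : Matrix n n R) (0 : Matrix r n R) = fromRows P C := by
  simp [fromBlocks_mul_fromRows]

theorem fromCols_one_zero_mul_fromRows_one_zero [Fintype n] [Fintype r] [DecidableEq n]
    [Semiring R] :
    fromCols (1 : Matrix n n R) (0 : Matrix n r R) * fromRows (1 : Matrix n n R) (0 : Matrix r n R) =
      1 := by
  simp [fromCols_mul_fromRows]

theorem fromBlocks_transpose_zero_zero_one_mul_fromRows [Fintype m] [Fintype r] [DecidableEq r]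
    [CommSemiring R] (A : Matrix m n R) (B : Matrix r n R) :
    fromBlocks Aᵀ 0 0 (1 : Matrix r r R) * fromRows A B = fromRows (Aᵀ * A) B := by
  simp [fromBlocks_mul_fromRows]

theorem fromCols_one_zero_mul_inv_mul_fromBlocks_mul_fromRows_eq_one [Fintype m] [Fintype n]
    [Fintype r] [DecidableEq n] [DecidableEq r] [CommRing R] (A : Matrix m n R) (B : Matrix r n R)
    (hM : IsUnit (fromBlocks (Aᵀ * A) Bᵀ B 0).det) :
    fromCols (1 : Matrix n n R) (0 : Matrix n r R) * (fromBlocks (Aᵀ * A) Bᵀ B 0)⁻¹ *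
      fromBlocks Aᵀ 0 0 (1 : Matrix r r R) * fromRows A B = 1 := by
  have hMJ : fromBlocks Aᵀ 0 0 (1 : Matrix r r R) * fromRows A B =
      fromBlocks (Aᵀ * A) Bᵀ B 0 * fromRows (1 : Matrix n n R) (0 : Matrix r n R) := by
    rw [fromBlocks_transpose_zero_zero_one_mul_fromRows, fromBlocks_mul_fromRows_one_zero]
  rw [Matrix.mul_assoc, hMJ, Matrix.mul_assoc, nonsing_inv_mul_cancel_left _ _ hM,
    fromCols_one_zero_mul_fromRows_one_zero]

end Matrix

theorem generalized_inverse_property_general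
    (n N r : ℕ)
    (A : Matrix (Fin N) (Fin n) ℝ) (B : Matrix (Fin r) (Fin n) ℝ)
    (M : Matrix (Fin n ⊕ Fin r) (Fin n ⊕ Fin r) ℝ)
    (hM : M = Matrix.fromBlocks (Aᵀ * A) Bᵀ B 0)
    (hMinv : IsUnit M)
    (G : Matrix (Fin n) (Fin N ⊕ Fin r) ℝ)
    (hG : G = (Matrix.fromCols (1 : Matrix (Fin n) (Fin n) ℝ) 0 : Matrix (Fin n) (Fin n ⊕ Fin r) ℝ) * M⁻¹ *
        Matrix.fromBlocks Aᵀ 0 0 (1 : Matrix (Fin r) (Fin r) ℝ))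
    (J : Matrix (Fin N ⊕ Fin r) (Fin n) ℝ) (hJ : J = Matrix.fromRows A B) :
    G * J = (1 : Matrix (Fin n) (Fin n) ℝ) ∧ G * J * G = G := by
  have hGJ : G * J = 1 := by
    subst hM hG hJ
    exact fromCols_one_zero_mul_inv_mul_fromBlocks_mul_fromRows_eq_one A B
      ((isUnit_iff_isUnit_det _).mp hMinv)
  exact ⟨hGJ, by rw [hGJ, Matrix.one_mul]⟩

/-- `G` is a left inverse of the stacked matrix `J = [A; B]`, and consequently a
generalized inverse of `J`: `G·J·G = G`. -/
theorem generalized_inverse_property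
    (n N r : ℕ) (hn : 0 < n) (hN : 0 < N) (hr : 0 < r)
    (A : Matrix (Fin N) (Fin n) ℝ) (B : Matrix (Fin r) (Fin n) ℝ)
    (M : Matrix (Fin n ⊕ Fin r) (Fin n ⊕ Fin r) ℝ)
    (hM : M = Matrix.fromBlocks (Aᵀ * A) Bᵀ B 0)
    (hMinv : IsUnit M)
    (G : Matrix (Fin n) (Fin N ⊕ Fin r) ℝ)
    (hG : G = (Matrix.fromCols (1 : Matrix (Fin n) (Fin n) ℝ) 0 : Matrix (Fin n) (Fin n ⊕ Fin r) ℝ) * M⁻¹ *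
        Matrix.fromBlocks Aᵀ 0 0 (1 : Matrix (Fin r) (Fin r) ℝ))
    (J : Matrix (Fin N ⊕ Fin r) (Fin n) ℝ) (hJ : J = Matrix.fromRows A B) :
    G * J = (1 : Matrix (Fin n) (Fin n) ℝ) ∧ G * J * G = G :=
  generalized_inverse_property_general n N r A B M hM hMinv G hG J hJ
end

section
/- The steepest-descent property of the natural level function: the gradient of L at q₀ equals G(F(q₀)); equivalently, the Gauss–Newton increment Δq = −G(F(q₀)) is the steepest descent direction of L at q₀ (∇L(q₀) = −Δq). -/
/-- Steepest-descent property of the natural level function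
`L(q) = ½‖G(F(q))‖²`: its gradient at `q₀` is `G(F(q₀))`, i.e. minus the
Gauss–Newton increment `Δq = -G(F(q₀))`. -/
theorem gradient_of_natural_level_function
    (n m : ℕ) (hn : 0 < n) (hm : 0 < m)
    (F : EuclideanSpace ℝ (Fin n) → EuclideanSpace ℝ (Fin m))
    (q₀ : EuclideanSpace ℝ (Fin n))
    (J : EuclideanSpace ℝ (Fin n) →L[ℝ] EuclideanSpace ℝ (Fin m))
    (hF : HasFDerivAt F J q₀)
    (G : EuclideanSpace ℝ (Fin m) →L[ℝ] EuclideanSpace ℝ (Fin n))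
    (hG : G.comp J = ContinuousLinearMap.id ℝ (EuclideanSpace ℝ (Fin n)))
    (L : EuclideanSpace ℝ (Fin n) → ℝ)
    (hL : ∀ q, L q = (1 / 2) * ‖G (F q)‖ ^ 2)
    (Δq : EuclideanSpace ℝ (Fin n)) (hΔq : Δq = -(G (F q₀))) :
    HasGradientAt L (G (F q₀)) q₀ ∧ HasGradientAt L (-Δq) q₀ := by
  have hGF : HasFDerivAt (fun q => G (F q)) (G.comp J) q₀ := G.hasFDerivAt.comp q₀ hF
  have h1 : HasFDerivAt (fun q => ‖G (F q)‖ ^ 2)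
      (2 • (innerSL ℝ (G (F q₀))).comp (G.comp J)) q₀ := hGF.norm_sq
  have h2 : HasFDerivAt L
      ((1 / 2 : ℝ) • (2 • (innerSL ℝ (G (F q₀))).comp (G.comp J))) q₀ := by
    have h2' := h1.const_smul (1 / 2 : ℝ)
    simp only [smul_eq_mul] at h2'
    have hLe : L = fun q => (1 / 2 : ℝ) * ‖G (F q)‖ ^ 2 := funext hL
    rw [hLe]
    exact h2'
  have h3 : ((1 / 2 : ℝ) • (2 • (innerSL ℝ (G (F q₀))).comp (G.comp J)))
      = (InnerProductSpace.toDual ℝ _) (G (F q₀)) := by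
    rw [hG]
    ext y
    simp [InnerProductSpace.toDual_apply_apply]
  rw [h3] at h2
  have hgrad : HasGradientAt L (G (F q₀)) q₀ := h2
  exact ⟨hgrad, by rw [hΔq, neg_neg]; exact hgrad⟩
end

section
/- Line-search contraction bound for the damped Gauss–Newton step: for 0 < α ≤ 1, if ‖G((DF(q₀ + tαΔq) − DF(q₀))(Δq))‖ ≤ ω·t·α·‖Δq‖² for all t ∈ [0,1] and some ω ≥ 0, then ‖G(F(q₀ + αΔq))‖ ≤ (1 − α)‖Δq‖ + (ω α²/2)‖Δq‖²; equivalently, L(q₀ + αΔq) ≤ (1 − α + (ω α²/2)‖Δq‖)² · L(q₀). -/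
/-!
Along the segment, `G F(q₀ + αΔq) = G F(q₀) + α G DF(q₀) Δq + α ∫₀¹ G (DF(q₀ + tαΔq) - DF(q₀)) Δq dt`
(first-order Taylor formula with integral remainder). As `G DF(q₀) = id` and `G F(q₀) = -Δq`, the
first two terms add up to `(α - 1) Δq`, while the hypothesis on `DF` bounds the remainder integral by
`ω α ‖Δq‖² / 2`. Squaring, with `‖G F(q₀)‖ = ‖Δq‖`, gives the bound on the level function.
-/

open intervalIntegral

section Taylor

variable {E F : Type*} [NormedAddCommGroup E] [NormedSpace ℝ E]
  [NormedAddCommGroup F] [NormedSpace ℝ F] [CompleteSpace F] {f : E → F}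

theorem ContDiff.map_add_sub_sub_fderiv_eq_integral (hf : ContDiff ℝ 1 f) (x y : E) :
    f (x + y) - f x - fderiv ℝ f x y =
      ∫ t in (0 : ℝ)..1, (fderiv ℝ f (x + t • y) - fderiv ℝ f x) y := by
  have hcont : Continuous fun t : ℝ => fderiv ℝ f (x + t • y) y :=
    ((hf.continuous_fderiv one_ne_zero).comp (by fun_prop)).clm_apply continuous_const
  have htaylor := map_add_eq_sum_add_integral_iteratedFDeriv (n := 0) (x := x) (y := y)
    fun t _ => hf.contDiffAt
  simp only [sub_apply]
  rw [integral_sub (hcont.intervalIntegrable 0 1) intervalIntegrable_const, htaylor]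
  simp

end Taylor

theorem norm_integral_unitInterval_le_of_norm_le_mul {E : Type*} [NormedAddCommGroup E]
    [NormedSpace ℝ E] {e : ℝ → E} {c : ℝ} (he : ∀ t ∈ Set.Icc (0 : ℝ) 1, ‖e t‖ ≤ c * t) :
    ‖∫ t in (0 : ℝ)..1, e t‖ ≤ c / 2 := by
  calc ‖∫ t in (0 : ℝ)..1, e t‖ ≤ ∫ t in (0 : ℝ)..1, c * t :=
        norm_integral_le_of_norm_le zero_le_one
          (Filter.Eventually.of_forall fun t ht => he t (Set.Ioc_subset_Icc_self ht))
          ((continuous_const_mul c).intervalIntegrable 0 1)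
    _ = c / 2 := by rw [integral_const_mul, integral_id]; ring

section GaussNewton

variable {E W : Type*} [NormedAddCommGroup E] [NormedSpace ℝ E] [CompleteSpace E]
  [NormedAddCommGroup W] [NormedSpace ℝ W] {F : E → W} {G : W →L[ℝ] E} {x Δ : E}

theorem gaussNewton_damped_residual_eq (hF : ContDiff ℝ 1 F)
    (hG : G.comp (fderiv ℝ F x) = ContinuousLinearMap.id ℝ E) (hΔ : Δ = -(G (F x))) (α : ℝ) :
    G (F (x + α • Δ)) =
      (α - 1) • Δ + α • ∫ t in (0 : ℝ)..1, G ((fderiv ℝ F (x + (t * α) • Δ) - fderiv ℝ F x) Δ) := by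
  have hGF : ContDiff ℝ 1 (G ∘ F) := G.contDiff.comp hF
  have hfderiv (z : E) : fderiv ℝ (G ∘ F) z = G.comp (fderiv ℝ F z) := by
    rw [fderiv_comp z G.differentiableAt (hF.differentiable one_ne_zero z), G.fderiv]
  have hstep : G (fderiv ℝ F x Δ) = Δ := by simpa using DFunLike.congr_fun hG Δ
  have htaylor := hGF.map_add_sub_sub_fderiv_eq_integral x (α • Δ)
  simp only [hfderiv, ← ContinuousLinearMap.comp_sub, smul_smul] at htaylor
  simp only [Function.comp_apply, ContinuousLinearMap.comp_apply, map_smul, hstep,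
    integral_smul] at htaylor
  rw [← htaylor, hΔ]
  module

theorem gaussNewton_damped_residual_norm_le (hF : ContDiff ℝ 1 F)
    (hG : G.comp (fderiv ℝ F x) = ContinuousLinearMap.id ℝ E) (hΔ : Δ = -(G (F x)))
    {α ω : ℝ} (hα₀ : 0 ≤ α) (hα₁ : α ≤ 1)
    (hbound : ∀ t ∈ Set.Icc (0 : ℝ) 1,
      ‖G ((fderiv ℝ F (x + (t * α) • Δ) - fderiv ℝ F x) Δ)‖ ≤ ω * t * α * ‖Δ‖ ^ 2) :
    ‖G (F (x + α • Δ))‖ ≤ (1 - α) * ‖Δ‖ + (ω * α ^ 2 / 2) * ‖Δ‖ ^ 2 := by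
  set I := ∫ t in (0 : ℝ)..1, G ((fderiv ℝ F (x + (t * α) • Δ) - fderiv ℝ F x) Δ)
  have hI : ‖I‖ ≤ ω * α * ‖Δ‖ ^ 2 / 2 :=
    norm_integral_unitInterval_le_of_norm_le_mul fun t ht => (hbound t ht).trans_eq (by ring)
  rw [gaussNewton_damped_residual_eq hF hG hΔ]
  calc ‖(α - 1) • Δ + α • I‖ ≤ ‖(α - 1) • Δ‖ + ‖α • I‖ := norm_add_le _ _
    _ = (1 - α) * ‖Δ‖ + α * ‖I‖ := by
      rw [norm_smul, norm_smul, Real.norm_of_nonpos (by linarith), Real.norm_of_nonneg hα₀, neg_sub]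
    _ ≤ (1 - α) * ‖Δ‖ + α * (ω * α * ‖Δ‖ ^ 2 / 2) := by gcongr
    _ = (1 - α) * ‖Δ‖ + (ω * α ^ 2 / 2) * ‖Δ‖ ^ 2 := by ring

end GaussNewton

theorem gauss_newton_line_search_contraction_general
    (n m : ℕ)
    (F : EuclideanSpace ℝ (Fin n) → EuclideanSpace ℝ (Fin m))
    (hF : ContDiff ℝ 1 F)
    (q₀ : EuclideanSpace ℝ (Fin n))
    (G : EuclideanSpace ℝ (Fin m) →L[ℝ] EuclideanSpace ℝ (Fin n))
    (hG : G.comp (fderiv ℝ F q₀) = ContinuousLinearMap.id ℝ (EuclideanSpace ℝ (Fin n)))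
    (Δq : EuclideanSpace ℝ (Fin n)) (hΔq : Δq = -(G (F q₀)))
    (L : EuclideanSpace ℝ (Fin n) → ℝ)
    (hL : ∀ q, L q = (1 / 2) * ‖G (F q)‖ ^ 2)
    (α : ℝ) (hα₀ : 0 < α) (hα₁ : α ≤ 1)
    (ω : ℝ)
    (hbound : ∀ t ∈ Set.Icc (0 : ℝ) 1,
      ‖G ((fderiv ℝ F (q₀ + (t * α) • Δq) - fderiv ℝ F q₀) Δq)‖ ≤
        ω * t * α * ‖Δq‖ ^ 2) :
    ‖G (F (q₀ + α • Δq))‖ ≤ (1 - α) * ‖Δq‖ + (ω * α ^ 2 / 2) * ‖Δq‖ ^ 2 ∧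
      L (q₀ + α • Δq) ≤ (1 - α + (ω * α ^ 2 / 2) * ‖Δq‖) ^ 2 * L q₀ := by
  have hres := gaussNewton_damped_residual_norm_le hF hG hΔq hα₀.le hα₁ hbound
  refine ⟨hres, ?_⟩
  have hnorm : ‖G (F q₀)‖ = ‖Δq‖ := by rw [hΔq, norm_neg]
  have hcontr : ‖G (F (q₀ + α • Δq))‖ ≤ (1 - α + (ω * α ^ 2 / 2) * ‖Δq‖) * ‖G (F q₀)‖ := by
    rw [hnorm]
    exact hres.trans_eq (by ring)
  have hsq := pow_le_pow_left₀ (norm_nonneg _) hcontr 2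
  rw [mul_pow] at hsq
  rw [hL, hL]
  linarith

/-- Line-search contraction bound for the damped Gauss–Newton step with the
natural level function `L(q) = ½‖G(F(q))‖²` and increment `Δq = -G(F(q₀))`. -/
theorem gauss_newton_line_search_contraction
    (n m : ℕ) (hn : 0 < n) (hm : 0 < m)
    (F : EuclideanSpace ℝ (Fin n) → EuclideanSpace ℝ (Fin m))
    (hF : ContDiff ℝ 1 F)
    (q₀ : EuclideanSpace ℝ (Fin n))
    (G : EuclideanSpace ℝ (Fin m) →L[ℝ] EuclideanSpace ℝ (Fin n))
    (hG : G.comp (fderiv ℝ F q₀) = ContinuousLinearMap.id ℝ (EuclideanSpace ℝ (Fin n)))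
    (Δq : EuclideanSpace ℝ (Fin n)) (hΔq : Δq = -(G (F q₀)))
    (L : EuclideanSpace ℝ (Fin n) → ℝ)
    (hL : ∀ q, L q = (1 / 2) * ‖G (F q)‖ ^ 2)
    (α : ℝ) (hα₀ : 0 < α) (hα₁ : α ≤ 1)
    (ω : ℝ) (hω : 0 ≤ ω)
    (hbound : ∀ t ∈ Set.Icc (0 : ℝ) 1,
      ‖G ((fderiv ℝ F (q₀ + (t * α) • Δq) - fderiv ℝ F q₀) Δq)‖ ≤
        ω * t * α * ‖Δq‖ ^ 2) :
    ‖G (F (q₀ + α • Δq))‖ ≤ (1 - α) * ‖Δq‖ + (ω * α ^ 2 / 2) * ‖Δq‖ ^ 2 ∧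
      L (q₀ + α • Δq) ≤ (1 - α + (ω * α ^ 2 / 2) * ‖Δq‖) ^ 2 * L q₀ :=
  gauss_newton_line_search_contraction_general n m F hF q₀ G hG Δq hΔq L hL α hα₀ hα₁ ω hbound
end

section
/- Descending property of the damped Gauss–Newton iteration: for 0 < α ≤ 1, if ‖G((DF(q₀ + tαΔq) − DF(q₀))(Δq))‖ ≤ ω·t·α·‖Δq‖² for all t ∈ [0,1] with some ω ≥ 0, and additionally α·ω·‖Δq‖ ≤ 2 (in particular whenever α ≤ min(1, η/(ω‖Δq‖)) for some η ∈ (0,2]), then L(q₀ + αΔq) ≤ L(q₀). -/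
/-!
With `G ∘ DF(q₀) = id`, the residual `G(F(q₀ + αΔq))` equals `(α - 1)Δq` plus the linearization
error `G(F(q₀ + αΔq) - F(q₀) - DF(q₀)(αΔq))`. Integrating the nonlinearity bound along the segment
bounds that error by `ω α² ‖Δq‖² / 2`, which the damping condition caps at `α ‖Δq‖`. Hence
`‖G(F(q₀ + αΔq))‖ ≤ (1 - α)‖Δq‖ + α‖Δq‖ = ‖G(F(q₀))‖`.
-/

open Set

section LinearizationError

variable {E : Type*} [NormedAddCommGroup E] [NormedSpace ℝ E]

-- Fence `‖f t - f 0‖` by the boundary function `K t² / 2`.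
theorem norm_sub_le_half_of_norm_deriv_le_mul {f f' : ℝ → E} {K : ℝ}
    (hf : ∀ t ∈ Icc (0 : ℝ) 1, HasDerivAt f (f' t) t)
    (bound : ∀ t ∈ Ico (0 : ℝ) 1, ‖f' t‖ ≤ K * t) :
    ‖f 1 - f 0‖ ≤ K / 2 := by
  have hB : ∀ t : ℝ, HasDerivAt (fun s : ℝ => K / 2 * s ^ 2) (K * t) t := fun t =>
    ((hasDerivAt_pow 2 t).const_mul (K / 2)).congr_deriv (by ring)
  have key := image_norm_le_of_norm_deriv_right_le_deriv_boundary' (a := 0) (b := 1)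
    (f := fun t => f t - f 0) (B := fun s => K / 2 * s ^ 2)
    (fun t ht => ((hf t ht).sub_const (f 0)).continuousAt.continuousWithinAt)
    (fun t ht => ((hf t (Ico_subset_Icc_self ht)).sub_const (f 0)).hasDerivWithinAt)
    (by simp) (fun t _ => (hB t).continuousAt.continuousWithinAt)
    (fun t _ => (hB t).hasDerivWithinAt) bound (right_mem_Icc.2 zero_le_one)
  simpa using key

variable {E' H : Type*} [NormedAddCommGroup E'] [NormedSpace ℝ E']
  [NormedAddCommGroup H] [NormedSpace ℝ H]

theorem hasDerivAt_comp_sub_smul_fderiv {F : E → E'} (G : E' →L[ℝ] H) {x v : E} {t : ℝ}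
    (hF : DifferentiableAt ℝ F (x + t • v)) :
    HasDerivAt (fun s : ℝ => G (F (x + s • v)) - s • G (fderiv ℝ F x v))
      (G ((fderiv ℝ F (x + t • v) - fderiv ℝ F x) v)) t := by
  have hline : HasDerivAt (fun s : ℝ => x + s • v) v t := by
    simpa using ((hasDerivAt_id t).smul_const v).const_add x
  have hGF := G.hasFDerivAt.comp_hasDerivAt t (hF.hasFDerivAt.comp_hasDerivAt t hline)
  exact (hGF.sub ((hasDerivAt_id' t).smul_const (G (fderiv ℝ F x v)))).congr_deriv
    (by rw [one_smul, sub_apply, map_sub])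

theorem norm_comp_linearization_error_le {F : E → E'} (G : E' →L[ℝ] H) {x v : E} {K : ℝ}
    (hF : ∀ t ∈ Icc (0 : ℝ) 1, DifferentiableAt ℝ F (x + t • v))
    (bound : ∀ t ∈ Ico (0 : ℝ) 1, ‖G ((fderiv ℝ F (x + t • v) - fderiv ℝ F x) v)‖ ≤ K * t) :
    ‖G (F (x + v)) - G (F x) - G (fderiv ℝ F x v)‖ ≤ K / 2 := by
  have h := norm_sub_le_half_of_norm_deriv_le_mul
    (fun t ht => hasDerivAt_comp_sub_smul_fderiv G (hF t ht)) bound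
  convert h using 2
  simp only [one_smul, zero_smul, add_zero]
  abel

end LinearizationError

theorem gauss_newton_descending_property_general
    (n m : ℕ)
    (F : EuclideanSpace ℝ (Fin n) → EuclideanSpace ℝ (Fin m))
    (hF : ContDiff ℝ 1 F)
    (q₀ : EuclideanSpace ℝ (Fin n))
    (G : EuclideanSpace ℝ (Fin m) →L[ℝ] EuclideanSpace ℝ (Fin n))
    (hG : G.comp (fderiv ℝ F q₀) = ContinuousLinearMap.id ℝ (EuclideanSpace ℝ (Fin n)))
    (Δq : EuclideanSpace ℝ (Fin n)) (hΔq : Δq = -(G (F q₀)))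
    (L : EuclideanSpace ℝ (Fin n) → ℝ)
    (hL : ∀ q, L q = (1 / 2) * ‖G (F q)‖ ^ 2)
    (α : ℝ) (hα₀ : 0 < α) (hα₁ : α ≤ 1)
    (ω : ℝ)
    (hbound : ∀ t ∈ Set.Icc (0 : ℝ) 1,
      ‖G ((fderiv ℝ F (q₀ + (t * α) • Δq) - fderiv ℝ F q₀) Δq)‖ ≤
        ω * t * α * ‖Δq‖ ^ 2)
    (hdamp : α * ω * ‖Δq‖ ≤ 2) :
    L (q₀ + α • Δq) ≤ L q₀ := by
  have hres : G (F q₀) = -Δq := by rw [hΔq, neg_neg]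
  have hNewton : G (fderiv ℝ F q₀ (α • Δq)) = α • Δq := congr($hG (α • Δq))
  have herr := norm_comp_linearization_error_le G (x := q₀) (v := α • Δq)
    (K := ω * α ^ 2 * ‖Δq‖ ^ 2) (fun t _ => (hF.differentiable one_ne_zero).differentiableAt)
    (fun t ht => by
      rw [smul_smul, map_smul, map_smul, norm_smul, Real.norm_of_nonneg hα₀.le]
      nlinarith [hbound t (Ico_subset_Icc_self ht)])
  rw [hNewton, hres] at herr
  have hstep : ‖G (F (q₀ + α • Δq))‖ ≤ ‖G (F q₀)‖ := calc
    ‖G (F (q₀ + α • Δq))‖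
        = ‖(G (F (q₀ + α • Δq)) - -Δq - α • Δq) + (1 - α) • (-Δq)‖ := by congr 1; module
    _ ≤ ω * α ^ 2 * ‖Δq‖ ^ 2 / 2 + (1 - α) * ‖Δq‖ := by
        grw [norm_add_le, herr, norm_smul, norm_neg, Real.norm_of_nonneg (by linarith)]
    _ ≤ ‖G (F q₀)‖ := by
        rw [hres, norm_neg]
        nlinarith [mul_nonneg hα₀.le (norm_nonneg Δq)]
  rw [hL, hL]
  gcongr

/-- Descending property of the damped Gauss–Newton iteration: under the
nonlinearity bound and the damping condition `α·ω·‖Δq‖ ≤ 2` (in particular for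
`α ≤ min(1, η/(ω‖Δq‖))` with `η ∈ (0,2]`), the natural level function
`L(q) = ½‖G(F(q))‖²` decreases: `L(q₀ + αΔq) ≤ L(q₀)`. -/
theorem gauss_newton_descending_property
    (n m : ℕ) (hn : 0 < n) (hm : 0 < m)
    (F : EuclideanSpace ℝ (Fin n) → EuclideanSpace ℝ (Fin m))
    (hF : ContDiff ℝ 1 F)
    (q₀ : EuclideanSpace ℝ (Fin n))
    (G : EuclideanSpace ℝ (Fin m) →L[ℝ] EuclideanSpace ℝ (Fin n))
    (hG : G.comp (fderiv ℝ F q₀) = ContinuousLinearMap.id ℝ (EuclideanSpace ℝ (Fin n)))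
    (Δq : EuclideanSpace ℝ (Fin n)) (hΔq : Δq = -(G (F q₀)))
    (L : EuclideanSpace ℝ (Fin n) → ℝ)
    (hL : ∀ q, L q = (1 / 2) * ‖G (F q)‖ ^ 2)
    (α : ℝ) (hα₀ : 0 < α) (hα₁ : α ≤ 1)
    (ω : ℝ) (hω : 0 ≤ ω)
    (hbound : ∀ t ∈ Set.Icc (0 : ℝ) 1,
      ‖G ((fderiv ℝ F (q₀ + (t * α) • Δq) - fderiv ℝ F q₀) Δq)‖ ≤
        ω * t * α * ‖Δq‖ ^ 2)
    (hdamp : α * ω * ‖Δq‖ ≤ 2) :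
    L (q₀ + α • Δq) ≤ L q₀ :=
  gauss_newton_descending_property_general n m F hF q₀ G hG Δq hΔq L hL α hα₀ hα₁ ω hbound hdamp
end

section
/- Block-exponential formula for the Local Linearization scheme: for h ≥ 0, the top block row of the matrix exponential exp(h·C) is given by E₁₁ = exp(h·A), E₁₂ = ∫₀ʰ exp((h−s)·A)·B ds, E₁₃ = ∫₀ʰ exp((h−s)·A)·a ds, and E₁₄ = ∫₀ʰ exp((h−s)·A)·(b + s·a) ds, where E₁₁, E₁₂, E₁₃, E₁₄ denote respectively the d×d, d×p, d×1 and d×1 blocks in the first block row of exp(h·C). -/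
/-!
Write `C = K + (C - K)` with `K = diag(A, N)`, where `N` is the nilpotent shift on the last two
coordinates. Duhamel's formula
`exp(hC) = exp(hK) + ∫₀ʰ exp((h-s)K) (C - K) exp(sC) ds`
settles the first block row: `C - K` only has the top-right block `D = [B, a, b]`, and `exp(sC)` is
block upper triangular with lower-right block `exp(sN)`, so the integrand's top-right block is
`exp((h-s)A) D exp(sN)`. Since `N² = 0`, `D exp(sN) = D (1 + sN) = [B, a, b + s a]`.
-/

open Matrix NormedSpace
open scoped Nat

theorem NormedSpace.exp_eq_one_add_of_mul_self_eq_zero {𝔸 : Type*} [Ring 𝔸] [Algebra ℚ 𝔸]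
    [TopologicalSpace 𝔸] [IsTopologicalRing 𝔸] {x : 𝔸} (hx : x * x = 0) : exp x = 1 + x := by
  have hvanish : ∀ k ∉ Finset.range 2, (k !⁻¹ : ℚ) • x ^ k = 0 := fun k hk => by
    obtain ⟨k, rfl⟩ := Nat.exists_eq_add_of_le' (not_lt.mp (Finset.mem_range.not.mp hk))
    rw [pow_add, sq, hx, mul_zero, smul_zero]
  rw [congrFun (exp_eq_tsum ℚ) x, tsum_eq_sum hvanish]
  simp [Finset.sum_range_succ]

theorem Matrix.fromCols_mul_exp_smul_fromBlocks_shift {m p : Type*} [Fintype p] [DecidableEq p]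
    (B : Matrix m p ℝ) (a b : m → ℝ) (s : ℝ) :
    -- without the ascription, `*` elaborates through `CStarMatrix`'s multiplication instance
    fromCols B (fromCols (replicateCol (Fin 1) a) (replicateCol (Fin 1) b)) *
        (exp (s • fromBlocks 0 0 0 (fromBlocks 0 1 0 0)) :
          Matrix (p ⊕ (Fin 1 ⊕ Fin 1)) (p ⊕ (Fin 1 ⊕ Fin 1)) ℝ) =
      fromCols B (fromCols (replicateCol (Fin 1) a) (replicateCol (Fin 1) (b + s • a))) := by
  rw [exp_eq_one_add_of_mul_self_eq_zero (by simp [fromBlocks_multiply]), Matrix.mul_add,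
    Matrix.mul_one, Matrix.mul_smul]
  ext i (j | (_ | _)) <;> simp [fromCols_mul_fromBlocks, add_comm]

section

variable {𝔸 : Type*} [NormedRing 𝔸] [NormedAlgebra ℝ 𝔸] [CompleteSpace 𝔸]

theorem NormedSpace.continuous_exp_sub_smul_mul_mul_exp_smul (K X M : 𝔸) (h : ℝ) :
    Continuous fun s : ℝ => exp ((h - s) • K) * X * exp (s • M) :=
  (((differentiable_exp_smul_const ℝ K).continuous.comp (continuous_sub_left h)).mul
    continuous_const).mul (differentiable_exp_smul_const ℝ M).continuous

theorem NormedSpace.exp_smul_eq_add_integral (K M : 𝔸) (h : ℝ) :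
    exp (h • M) = exp (h • K) + ∫ s in (0 : ℝ)..h, exp ((h - s) • K) * (M - K) * exp (s • M) := by
  have hderiv : ∀ s, HasDerivAt (fun t : ℝ => exp ((h - t) • K) * exp (t • M))
      (exp ((h - s) • K) * (M - K) * exp (s • M)) s := fun s => by
    have hK := (hasDerivAt_exp_smul_const K (h - s)).scomp s ((hasDerivAt_id s).const_sub h)
    refine (hK.mul (hasDerivAt_exp_smul_const' M s)).congr_deriv ?_
    simp only [Function.comp_apply, neg_one_smul, neg_mul]
    noncomm_ring
  rw [intervalIntegral.integral_eq_sub_of_hasDerivAt (fun s _ => hderiv s)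
    ((continuous_exp_sub_smul_mul_mul_exp_smul K (M - K) M h).intervalIntegrable 0 h)]
  simp

end

namespace Matrix

attribute [local instance] Matrix.linftyOpNormedAddCommGroup Matrix.linftyOpNormedSpace
  Matrix.linftyOpNormedRing Matrix.linftyOpNormedAlgebra

variable {m n 𝕂 : Type*} [Fintype m] [DecidableEq m] [Fintype n] [DecidableEq n] [RCLike 𝕂]

theorem exp_apply_eq_tsum (M : Matrix m m 𝕂) (i j : m) :
    exp M i j = ∑' k : ℕ, (k !⁻¹ : 𝕂) * (M ^ k) i j := by
  have hs := expSeries_summable' (𝕂 := 𝕂) M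
  rw [congrFun (exp_eq_tsum 𝕂) M]
  exact (congrFun (tsum_apply hs) j).trans (tsum_apply (Pi.summable.mp hs i))

theorem pow_fromBlocks_zero₂₁ (A : Matrix m m 𝕂) (D : Matrix m n 𝕂) (N : Matrix n n 𝕂) (k : ℕ) :
    ∃ X, fromBlocks A D 0 N ^ k = fromBlocks (A ^ k) X 0 (N ^ k) := by
  induction k with
  | zero => exact ⟨0, by simp [fromBlocks_one]⟩
  | succ k ih =>
    obtain ⟨X, hX⟩ := ih
    exact ⟨A ^ k * D + X * N, by simp [pow_succ, hX, fromBlocks_multiply]⟩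

theorem exp_fromBlocks_diagonal (A : Matrix m m 𝕂) (N : Matrix n n 𝕂) :
    exp (fromBlocks A 0 0 N) = fromBlocks (exp A) 0 0 (exp N) := by
  ext (i | i) (j | j) <;> simp [exp_apply_eq_tsum, fromBlocks_diagonal_pow]

theorem exp_fromBlocks_zero₂₁ (A : Matrix m m 𝕂) (D : Matrix m n 𝕂) (N : Matrix n n 𝕂) :
    ∃ X, exp (fromBlocks A D 0 N) = fromBlocks (exp A) X 0 (exp N) := by
  choose X hX using pow_fromBlocks_zero₂₁ A D N
  refine ⟨(exp (fromBlocks A D 0 N)).toBlocks₁₂, ?_⟩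
  ext (i | i) (j | j) <;> simp [exp_apply_eq_tsum, hX, toBlocks₁₂]

theorem exp_fromBlocks_zero₂₁_apply_inl_inl (A : Matrix m m 𝕂) (D : Matrix m n 𝕂)
    (N : Matrix n n 𝕂) (i j : m) : exp (fromBlocks A D 0 N) (.inl i) (.inl j) = exp A i j := by
  obtain ⟨X, hX⟩ := exp_fromBlocks_zero₂₁ A D N
  rw [hX]
  rfl

omit [DecidableEq m] [DecidableEq n] in
theorem intervalIntegral_apply {F : ℝ → Matrix m n ℝ} {a b : ℝ}
    (hF : Continuous F) (i : m) (j : n) :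
    (∫ s in a..b, F s) i j = ∫ s in a..b, F s i j :=
  ((entryLinearMap ℝ ℝ i j).toContinuousLinearMap.intervalIntegral_comp_comm
    (hF.intervalIntegrable a b)).symm

theorem exp_smul_fromBlocks_zero₂₁_apply_inl_inr (A : Matrix m m ℝ) (D : Matrix m n ℝ)
    (N : Matrix n n ℝ) (h : ℝ) (i : m) (j : n) :
    exp (h • fromBlocks A D 0 N) (.inl i) (.inr j) =
      ∫ s in (0 : ℝ)..h, (exp ((h - s) • A) * D * exp (s • N)) i j := by
  set M := fromBlocks A D 0 N
  set K := fromBlocks A 0 0 N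
  have hintegrand (s : ℝ) : exp ((h - s) • K) * (M - K) * exp (s • M) =
      fromBlocks 0 (exp ((h - s) • A) * D * exp (s • N)) 0 0 := by
    obtain ⟨X, hX⟩ := exp_fromBlocks_zero₂₁ (s • A) (s • D) (s • N)
    have hMK : M - K = fromBlocks 0 D 0 0 := by
      ext (i | i) (j | j) <;> simp [M, K]
    simp only [K, M, hMK, fromBlocks_smul, smul_zero, exp_fromBlocks_diagonal, hX,
      fromBlocks_multiply]
    simp [Matrix.mul_assoc]
  -- restated so that `exp` and the integral use the product topology on matrices, not the
  -- (defeq) topology of the local operator norm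
  have hduhamel : exp (h • M) =
      exp (h • K) + ∫ s in (0 : ℝ)..h, exp ((h - s) • K) * (M - K) * exp (s • M) :=
    exp_smul_eq_add_integral K M h
  have hcont : Continuous fun s : ℝ => exp ((h - s) • K) * (M - K) * exp (s • M) :=
    continuous_exp_sub_smul_mul_mul_exp_smul K (M - K) M h
  have hentry := congrArg (fun X => X (.inl i) (.inr j)) hduhamel
  simp only [add_apply] at hentry
  rw [intervalIntegral_apply hcont] at hentry
  simp only [hintegrand] at hentry
  simpa [K, fromBlocks_smul, exp_fromBlocks_diagonal] using hentry

end Matrix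

theorem block_exponential_formula_general
    (d p : ℕ)
    (A : Matrix (Fin d) (Fin d) ℝ) (B : Matrix (Fin d) (Fin p) ℝ)
    (a b : Fin d → ℝ)
    (C : Matrix (Fin d ⊕ (Fin p ⊕ (Fin 1 ⊕ Fin 1))) (Fin d ⊕ (Fin p ⊕ (Fin 1 ⊕ Fin 1))) ℝ)
    (hC : C = Matrix.fromBlocks A
        (Matrix.fromCols B (Matrix.fromCols (Matrix.replicateCol (Fin 1) a) (Matrix.replicateCol (Fin 1) b)))
        0
        (Matrix.fromBlocks 0 0 0
          (Matrix.fromBlocks 0 (1 : Matrix (Fin 1) (Fin 1) ℝ) 0 0)))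
    (h : ℝ) :
    (∀ i j, NormedSpace.exp (h • C) (Sum.inl i) (Sum.inl j) =
        NormedSpace.exp (h • A) i j) ∧
    (∀ i j, NormedSpace.exp (h • C) (Sum.inl i) (Sum.inr (Sum.inl j)) =
        ∫ s in (0 : ℝ)..h, (NormedSpace.exp ((h - s) • A) * B) i j) ∧
    (∀ i, NormedSpace.exp (h • C) (Sum.inl i) (Sum.inr (Sum.inr (Sum.inl 0))) =
        ∫ s in (0 : ℝ)..h, (NormedSpace.exp ((h - s) • A)).mulVec a i) ∧
    (∀ i, NormedSpace.exp (h • C) (Sum.inl i) (Sum.inr (Sum.inr (Sum.inr 0))) =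
        ∫ s in (0 : ℝ)..h, (NormedSpace.exp ((h - s) • A)).mulVec (b + s • a) i) := by
  subst hC
  have hrow (s : ℝ) :
      exp ((h - s) • A) *
          fromCols B (fromCols (replicateCol (Fin 1) a) (replicateCol (Fin 1) b)) *
          (exp (s • fromBlocks 0 0 0 (fromBlocks 0 1 0 0)) :
            Matrix (Fin p ⊕ (Fin 1 ⊕ Fin 1)) (Fin p ⊕ (Fin 1 ⊕ Fin 1)) ℝ) =
        fromCols (exp ((h - s) • A) * B) (fromCols
          (replicateCol (Fin 1) (exp ((h - s) • A) *ᵥ a))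
          (replicateCol (Fin 1) (exp ((h - s) • A) *ᵥ (b + s • a)))) := by
    rw [Matrix.mul_assoc, fromCols_mul_exp_smul_fromBlocks_shift, mul_fromCols, mul_fromCols,
      replicateCol_mulVec, replicateCol_mulVec]
  refine ⟨fun i j => ?_, fun i j => ?_, fun i => ?_, fun i => ?_⟩
  · simp only [fromBlocks_smul, smul_zero, exp_fromBlocks_zero₂₁_apply_inl_inl]
  all_goals simp only [exp_smul_fromBlocks_zero₂₁_apply_inl_inr, hrow]; simp

/-- Block-exponential formula for the Local Linearization scheme: the first
block row of `exp(h·C)`, where `C = [[A, B, a, b], [0,0,0,0], [0,0,0,1], [0,0,0,0]]`,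
is given by `E₁₁ = exp(hA)`, `E₁₂ = ∫₀ʰ exp((h−s)A)·B ds`,
`E₁₃ = ∫₀ʰ exp((h−s)A)·a ds` and `E₁₄ = ∫₀ʰ exp((h−s)A)·(b + s·a) ds`. -/
theorem block_exponential_formula
    (d p : ℕ) (hd : 0 < d) (hp : 0 < p)
    (A : Matrix (Fin d) (Fin d) ℝ) (B : Matrix (Fin d) (Fin p) ℝ)
    (a b : Fin d → ℝ)
    (C : Matrix (Fin d ⊕ (Fin p ⊕ (Fin 1 ⊕ Fin 1))) (Fin d ⊕ (Fin p ⊕ (Fin 1 ⊕ Fin 1))) ℝ)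
    (hC : C = Matrix.fromBlocks A
        (Matrix.fromCols B (Matrix.fromCols (Matrix.replicateCol (Fin 1) a) (Matrix.replicateCol (Fin 1) b)))
        0
        (Matrix.fromBlocks 0 0 0
          (Matrix.fromBlocks 0 (1 : Matrix (Fin 1) (Fin 1) ℝ) 0 0)))
    (h : ℝ) (hh : 0 ≤ h) :
    (∀ i j, NormedSpace.exp (h • C) (Sum.inl i) (Sum.inl j) =
        NormedSpace.exp (h • A) i j) ∧
    (∀ i j, NormedSpace.exp (h • C) (Sum.inl i) (Sum.inr (Sum.inl j)) =
        ∫ s in (0 : ℝ)..h, (NormedSpace.exp ((h - s) • A) * B) i j) ∧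
    (∀ i, NormedSpace.exp (h • C) (Sum.inl i) (Sum.inr (Sum.inr (Sum.inl 0))) =
        ∫ s in (0 : ℝ)..h, (NormedSpace.exp ((h - s) • A)).mulVec a i) ∧
    (∀ i, NormedSpace.exp (h • C) (Sum.inl i) (Sum.inr (Sum.inr (Sum.inr 0))) =
        ∫ s in (0 : ℝ)..h, (NormedSpace.exp ((h - s) • A)).mulVec (b + s • a) i) :=
  block_exponential_formula_general d p A B a b C hC h
end

section
/- First-order convergence of the Local Linearization approximation to the variational equation with respect to the parameters: let X : ℝ → ℝ^{d×p} satisfy X(τ) = 0 and X′(t) = D_x f(t, x(t))·X(t) + B(t, x(t)) for t ∈ [τ, τ+T], and for a partition define Y₀ = 0 and Y_{n+1} = exp(hₙ·Aₙ)·Yₙ + ∫₀^{hₙ} exp((hₙ − u)·Aₙ)·Bₙ du, with Aₙ = D_x f(tₙ, yₙ), Bₙ = B(tₙ, yₙ), and yₙ the Local Linearization discretization (y₀ = s, y_{n+1} = yₙ + ∫₀^{hₙ} exp((hₙ − u)·Aₙ)·(f(tₙ,yₙ) + u·∂_t f(tₙ,yₙ)) du). Then there exist constants C > 0 and h₀ >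 0 such that for every partition τ = t₀ < ... < t_N = τ+T with max_n hₙ ≤ h ≤ h₀, one has max_{0 ≤ n ≤ N} ‖X(tₙ) − Yₙ‖ ≤ C·h. -/
/-!
Both local linearization steps agree with the explicit Euler step up to `O(hₙ²)`, because
`exp (h • A) = 1 + h • A + O(h²)` uniformly for bounded `A`. By the mean value inequality the exact
solutions `x` and `X` satisfy the Euler relation up to `O(h hₙ)`; for `X` the Jacobian and `B` are
evaluated at the numerical state `yₙ` rather than at `x(tₙ)`, which costs `O(‖x(tₙ) - yₙ‖ hₙ)`,
again `O(h hₙ)` by the first-order convergence of the state scheme. Both errors therefore obey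
`eₙ₊₁ ≤ (1 + L hₙ) eₙ + K h hₙ` with `e₀ = 0`, and the discrete Grönwall inequality gives
`eₙ ≤ K T exp (L T) h`.
-/

open Matrix

attribute [local instance] Matrix.seminormedAddCommGroup Matrix.normedAddCommGroup Matrix.normedSpace

noncomputable instance matrixCLMNorm {E : Type*} [SeminormedAddCommGroup E] [NormedSpace ℝ E]
    (m n : Type*) [Fintype m] [Fintype n] : Norm (E →L[ℝ] Matrix m n ℝ) :=
  ContinuousLinearMap.hasOpNorm

open Set Finset
open scoped Nat

section MeanValue

variable {E : Type*} [NormedAddCommGroup E] [NormedSpace ℝ E]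

theorem norm_sub_sub_smul_le_of_hasDerivAt {F F' : ℝ → E} {a b ε : ℝ} {v : E} (hab : a ≤ b)
    (hF : ∀ u ∈ Icc a b, HasDerivAt F (F' u) u) (hε : ∀ u ∈ Icc a b, ‖F' u - v‖ ≤ ε) :
    ‖F b - F a - (b - a) • v‖ ≤ ε * (b - a) := by
  have h := norm_image_sub_le_of_norm_deriv_le_segment' (f := fun u => F u - u • v)
    (fun u hu => ((hF u hu).sub ((hasDerivAt_id u).smul_const v)).hasDerivWithinAt)
    (fun u hu => by simpa using hε u (Ico_subset_Icc_self hu)) b ⟨hab, le_rfl⟩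
  convert h using 2
  rw [sub_smul]
  abel

theorem norm_sub_le_of_hasDerivAt_of_norm_le {F F' : ℝ → E} {a b C s s' : ℝ}
    (hF : ∀ u ∈ Icc a b, HasDerivAt F (F' u) u) (hC : ∀ u ∈ Icc a b, ‖F' u‖ ≤ C)
    (hs : s ∈ Icc a b) (hs' : s' ∈ Icc a b) (hss' : s ≤ s') : ‖F s' - F s‖ ≤ C * (s' - s) := by
  have hsub : Icc s s' ⊆ Icc a b := Icc_subset_Icc hs.1 hs'.2
  simpa using norm_sub_sub_smul_le_of_hasDerivAt hss' (fun u hu => hF u (hsub hu))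
    (v := 0) fun u hu => by simpa using hC u (hsub hu)

theorem norm_integral_sub_smul_le [CompleteSpace E] {g : ℝ → E} {a b ε : ℝ} {c : E} (hab : a ≤ b)
    (hg : IntervalIntegrable g MeasureTheory.volume a b) (hε : ∀ u ∈ Ioc a b, ‖g u - c‖ ≤ ε) :
    ‖(∫ u in a..b, g u) - (b - a) • c‖ ≤ ε * (b - a) := by
  rw [← intervalIntegral.integral_const,
    ← intervalIntegral.integral_sub hg intervalIntegrable_const]
  refine (intervalIntegral.norm_integral_le_of_norm_le_const (C := ε) ?_).trans_eq ?_
  · rwa [uIoc_of_le hab]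
  · rw [abs_of_nonneg (sub_nonneg.2 hab)]

end MeanValue

theorem norm_prodMk_sub_prodMk_le {E : Type*} [SeminormedAddCommGroup E] (t t' : ℝ) (y y' : E) :
    ‖(t, y) - (t', y')‖ ≤ |t - t'| + ‖y - y'‖ := by
  rw [Prod.mk_sub_mk, Prod.norm_def]
  exact max_le (le_add_of_nonneg_right (norm_nonneg _)) (le_add_of_nonneg_left (abs_nonneg _))

section PartialDerivative

variable {E F : Type*} [NormedAddCommGroup E] [NormedSpace ℝ E]
  [NormedAddCommGroup F] [NormedSpace ℝ F] {f : ℝ → E → F} {M : ℝ}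

theorem norm_sub_le_of_norm_fderiv_le {g : E → F} (hg : Differentiable ℝ g)
    (hM : ∀ z, ‖fderiv ℝ g z‖ ≤ M) (z w : E) : ‖g z - g w‖ ≤ M * ‖z - w‖ :=
  convex_univ.norm_image_sub_le_of_norm_fderiv_le (fun z _ => hg z) (fun z _ => hM z)
    (mem_univ w) (mem_univ z)

theorem fderiv_apply_eq_comp_inr {t : ℝ} {y : E}
    (hf : DifferentiableAt ℝ (Function.uncurry f) (t, y)) :
    fderiv ℝ (f t) y = (fderiv ℝ (Function.uncurry f) (t, y)).comp (.inr ℝ ℝ E) :=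
  (hf.hasFDerivAt.comp y (hasFDerivAt_prodMk_right t y)).fderiv

theorem norm_fderiv_apply_le (hf : Differentiable ℝ (Function.uncurry f))
    (hM : ∀ q, ‖fderiv ℝ (Function.uncurry f) q‖ ≤ M) (t : ℝ) (y : E) :
    ‖fderiv ℝ (f t) y‖ ≤ M := by
  rw [fderiv_apply_eq_comp_inr (hf _)]
  exact (ContinuousLinearMap.opNorm_comp_le _ _).trans <|
    (mul_le_of_le_one_right (norm_nonneg _) (ContinuousLinearMap.norm_inr_le_one ℝ ℝ E)).trans
      (hM _)

theorem norm_fderiv_apply_sub_le (hf : ContDiff ℝ 2 (Function.uncurry f))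
    (hM : ∀ q, ‖fderiv ℝ (fderiv ℝ (Function.uncurry f)) q‖ ≤ M) (t t' : ℝ) (y y' : E) :
    ‖fderiv ℝ (f t) y - fderiv ℝ (f t') y'‖ ≤ M * ‖(t, y) - (t', y')‖ := by
  have hf₁ : Differentiable ℝ (Function.uncurry f) := hf.differentiable (by norm_num)
  have hf₂ : Differentiable ℝ (fderiv ℝ (Function.uncurry f)) :=
    (hf.fderiv_right (m := 1) (by norm_num)).differentiable (by norm_num)
  rw [fderiv_apply_eq_comp_inr (hf₁ _), fderiv_apply_eq_comp_inr (hf₁ _),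
    ← ContinuousLinearMap.sub_comp]
  refine (ContinuousLinearMap.opNorm_comp_le _ _).trans ?_
  exact (mul_le_of_le_one_right (norm_nonneg _) (ContinuousLinearMap.norm_inr_le_one ℝ ℝ E)).trans
    (norm_sub_le_of_norm_fderiv_le hf₂ hM _ _)

theorem norm_deriv_apply_le (hf : Differentiable ℝ (Function.uncurry f))
    (hM : ∀ q, ‖fderiv ℝ (Function.uncurry f) q‖ ≤ M) (t : ℝ) (y : E) :
    ‖deriv (fun s => f s y) t‖ ≤ M := by
  have hderiv : HasDerivAt (fun s => f s y) (fderiv ℝ (Function.uncurry f) (t, y) (1, 0)) t :=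
    (hf _).hasFDerivAt.comp_hasDerivAt t ((hasDerivAt_id t).prodMk (hasDerivAt_const t y))
  rw [hderiv.deriv]
  refine ((fderiv ℝ (Function.uncurry f) (t, y)).le_opNorm _).trans ?_
  simp only [Prod.norm_def, norm_one, norm_zero, zero_le_one, max_eq_left, mul_one]
  exact hM _

end PartialDerivative

theorem LinearMap.norm_toMatrix'_le {ι κ : Type*} [Fintype ι] [DecidableEq ι] [Fintype κ]
    (L : (ι → ℝ) →L[ℝ] κ → ℝ) : ‖LinearMap.toMatrix' (L : (ι → ℝ) →ₗ[ℝ] κ → ℝ)‖ ≤ ‖L‖ := by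
  refine (Matrix.norm_le_iff (norm_nonneg L)).2 fun i j => ?_
  rw [LinearMap.toMatrix'_apply]
  calc ‖L (Pi.single j 1) i‖ ≤ ‖L (Pi.single j 1)‖ := norm_le_pi_norm _ i
    _ ≤ ‖L‖ * ‖(Pi.single j 1 : ι → ℝ)‖ := L.le_opNorm _
    _ = ‖L‖ := by rw [Pi.norm_single, norm_one, mul_one]

/-- Needed to integrate matrix-valued functions; instance search does not find it because the
topology on `Matrix` is not reducibly the one of its sup norm. -/
noncomputable abbrev Matrix.supENormedAddCommMonoid (m n : Type*) [Fintype m] [Fintype n] :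
    ENormedAddCommMonoid (Matrix m n ℝ) :=
  NormedAddCommGroup.toENormedAddCommMonoid

attribute [local instance] Matrix.supENormedAddCommMonoid

namespace Matrix

section SupNorm

variable {l m n α : Type*} [Fintype l] [Fintype m] [Fintype n] [NonUnitalSeminormedRing α]

theorem norm_mul_le_card_mul (A : Matrix l m α) (B : Matrix m n α) :
    ‖A * B‖ ≤ Fintype.card m * ‖A‖ * ‖B‖ := by
  refine (norm_le_iff (by positivity)).2 fun i j => ?_
  calc ‖(A * B) i j‖ ≤ ∑ k, ‖A i k‖ * ‖B k j‖ :=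
        norm_sum_le_of_le _ fun k _ => norm_mul_le _ _
    _ ≤ ∑ _k : m, ‖A‖ * ‖B‖ := by
        gcongr <;> exact norm_entry_le_entrywise_sup_norm _
    _ = Fintype.card m * ‖A‖ * ‖B‖ := by simp [mul_assoc]

theorem norm_mul_le_card_mul_of_le {A : Matrix l m α} {B : Matrix m n α} {a b : ℝ}
    (hA : ‖A‖ ≤ a) (hB : ‖B‖ ≤ b) : ‖A * B‖ ≤ Fintype.card m * a * b :=
  (norm_mul_le_card_mul A B).trans <| mul_le_mul (by gcongr) hB (norm_nonneg B)
    (mul_nonneg (Nat.cast_nonneg _) ((norm_nonneg A).trans hA))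

theorem norm_mulVec_le_card_mul (A : Matrix l m α) (v : m → α) :
    ‖A *ᵥ v‖ ≤ Fintype.card m * ‖A‖ * ‖v‖ := by
  refine (pi_norm_le_iff_of_nonneg (by positivity)).2 fun i => ?_
  calc ‖(A *ᵥ v) i‖ ≤ ∑ k, ‖A i k‖ * ‖v k‖ :=
        norm_sum_le_of_le _ fun k _ => norm_mul_le _ _
    _ ≤ ∑ _k : m, ‖A‖ * ‖v‖ := by
        gcongr
        · exact norm_entry_le_entrywise_sup_norm _
        · exact norm_le_pi_norm v _
    _ = Fintype.card m * ‖A‖ * ‖v‖ := by simp [mul_assoc]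

end SupNorm

section Exp

variable {n : Type*} [Fintype n] [DecidableEq n]

theorem norm_one_le : ‖(1 : Matrix n n ℝ)‖ ≤ 1 :=
  (norm_le_iff zero_le_one).2 fun i j => by rw [one_apply]; split_ifs <;> simp

theorem norm_pow_le_card_mul (A : Matrix n n ℝ) (k : ℕ) :
    ‖A ^ k‖ ≤ (Fintype.card n * ‖A‖) ^ k := by
  induction k with
  | zero => simpa using norm_one_le
  | succ k ih =>
    calc ‖A ^ (k + 1)‖ ≤ Fintype.card n * ‖A‖ * ‖A ^ k‖ := by
          rw [pow_succ']; exact norm_mul_le_card_mul _ _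
      _ ≤ Fintype.card n * ‖A‖ * (Fintype.card n * ‖A‖) ^ k := by gcongr
      _ = (Fintype.card n * ‖A‖) ^ (k + 1) := by ring

theorem norm_expSeries_term_le (A : Matrix n n ℝ) (k : ℕ) :
    ‖(k !⁻¹ : ℝ) • A ^ k‖ ≤ (Fintype.card n * ‖A‖) ^ k / k ! := by
  rw [norm_smul, norm_inv, Real.norm_natCast, inv_mul_eq_div]
  gcongr
  exact norm_pow_le_card_mul A k

theorem norm_exp_sub_sum_range_le (A : Matrix n n ℝ) (m : ℕ) :
    ‖NormedSpace.exp A - ∑ k ∈ range m, (k !⁻¹ : ℝ) • A ^ k‖ ≤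
      (Fintype.card n * ‖A‖) ^ m * Real.exp (Fintype.card n * ‖A‖) := by
  set r := Fintype.card n * ‖A‖
  have hnorm : Summable fun k => ‖(k !⁻¹ : ℝ) • A ^ k‖ :=
    (Real.summable_pow_div_factorial r).of_nonneg_of_le (fun _ => norm_nonneg _)
      (norm_expSeries_term_le A)
  have htail : Summable fun k => ‖((k + m) !⁻¹ : ℝ) • A ^ (k + m)‖ :=
    (summable_nat_add_iff m).2 hnorm
  have hexp : NormedSpace.exp A = ∑ k ∈ range m, (k !⁻¹ : ℝ) • A ^ k +
      ∑' k, ((k + m) !⁻¹ : ℝ) • A ^ (k + m) := by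
    rw [congrFun (NormedSpace.exp_eq_tsum ℝ) A]
    exact (hnorm.of_norm.sum_add_tsum_nat_add m).symm
  rw [hexp, add_sub_cancel_left]
  calc ‖∑' k, ((k + m) !⁻¹ : ℝ) • A ^ (k + m)‖
      ≤ ∑' k, ‖((k + m) !⁻¹ : ℝ) • A ^ (k + m)‖ := norm_tsum_le_tsum_norm htail
    _ ≤ ∑' k, r ^ m * (r ^ k / k !) := by
        refine htail.tsum_le_tsum (fun k => (norm_expSeries_term_le A _).trans ?_)
          ((Real.summable_pow_div_factorial r).mul_left _)
        rw [pow_add, mul_comm (r ^ k), mul_div_assoc]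
        gcongr
        exact Nat.le_add_right k m
    _ = r ^ m * Real.exp r := by
        rw [tsum_mul_left, Real.exp_eq_exp_ℝ, NormedSpace.exp_eq_tsum_div]

theorem exists_norm_exp_smul_sub_le {M : ℝ} (hM : 0 ≤ M) :
    ∃ c, 0 ≤ c ∧ ∀ A : Matrix n n ℝ, ‖A‖ ≤ M → ∀ s, 0 ≤ s → s ≤ 1 →
      ‖NormedSpace.exp (s • A) - 1‖ ≤ c * s ∧
      ‖NormedSpace.exp (s • A) - 1 - s • A‖ ≤ c * s ^ 2 := by
  set r := Fintype.card n * M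
  have hr : 0 ≤ r := by positivity
  refine ⟨(r + r ^ 2) * Real.exp r, by positivity, fun A hA s hs₀ hs₁ => ?_⟩
  have hsA : Fintype.card n * ‖s • A‖ ≤ s * r := by
    rw [norm_smul, Real.norm_of_nonneg hs₀, mul_left_comm]
    exact mul_le_mul_of_nonneg_left (mul_le_mul_of_nonneg_left hA (Nat.cast_nonneg _)) hs₀
  have key : ∀ m, ‖NormedSpace.exp (s • A) - ∑ k ∈ range m, (k !⁻¹ : ℝ) • (s • A) ^ k‖ ≤
      s ^ m * (r ^ m * Real.exp r) := fun m => by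
    rw [← mul_assoc, ← mul_pow]
    exact (norm_exp_sub_sum_range_le _ m).trans <|
      mul_le_mul (pow_le_pow_left₀ (by positivity) hsA m)
        (Real.exp_le_exp.2 (hsA.trans (mul_le_of_le_one_left hr hs₁))) (by positivity)
        (by positivity)
  have h1 := key 1
  have h2 := key 2
  simp only [Finset.sum_range_succ, Finset.sum_range_zero, Nat.factorial_zero,
    Nat.factorial_one, Nat.cast_one, inv_one, one_smul, pow_zero, pow_one, zero_add] at h1 h2
  rw [← sub_sub] at h2
  have he := (Real.exp_pos r).le
  constructor
  · nlinarith [mul_nonneg (mul_nonneg hs₀ (sq_nonneg r)) he]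
  · nlinarith [mul_nonneg (mul_nonneg (sq_nonneg s) hr) he]

-- The `L∞` operator norm makes `Matrix n n ℝ` a Banach algebra without changing its topology.
theorem continuous_exp : Continuous (NormedSpace.exp : Matrix n n ℝ → Matrix n n ℝ) :=
  open scoped Norms.Operator in NormedSpace.exp_continuous

theorem continuous_exp_sub_smul (A : Matrix n n ℝ) (h : ℝ) :
    Continuous fun u : ℝ => NormedSpace.exp ((h - u) • A) :=
  continuous_exp.comp ((continuous_const.sub continuous_id).smul continuous_const)

end Exp

section LocalLinearizationStep

variable {n p : Type*} [Fintype n] [DecidableEq n] [Fintype p]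

theorem exists_norm_integral_exp_mulVec_sub_le {M : ℝ} (hM : 0 ≤ M) :
    ∃ c, 0 ≤ c ∧ ∀ A : Matrix n n ℝ, ‖A‖ ≤ M → ∀ h, 0 ≤ h → h ≤ 1 → ∀ v w : n → ℝ,
      ‖(∫ u in (0 : ℝ)..h, NormedSpace.exp ((h - u) • A) *ᵥ (v + u • w)) - h • v‖ ≤
        c * h ^ 2 * (‖v‖ + ‖w‖) := by
  obtain ⟨c₀, hc₀, hexp⟩ := exists_norm_exp_smul_sub_le (n := n) hM
  refine ⟨Fintype.card n * c₀ + 1, by positivity, fun A hA h h₀ h₁ v w => ?_⟩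
  have hint : IntervalIntegrable (fun u => NormedSpace.exp ((h - u) • A) *ᵥ (v + u • w))
      MeasureTheory.volume 0 h :=
    ((continuous_exp_sub_smul A h).matrix_mulVec
      (continuous_const.add (continuous_id.smul continuous_const))).intervalIntegrable _ _
  have key := norm_integral_sub_smul_le h₀ hint (c := v)
    (ε := (Fintype.card n * c₀ + 1) * h * (‖v‖ + ‖w‖)) fun u hu => by
    obtain ⟨hu₀, hu₁⟩ := hu
    have hE : ‖NormedSpace.exp ((h - u) • A) - 1‖ ≤ c₀ * h :=
      (hexp A hA (h - u) (by linarith) (by linarith)).1.trans (by nlinarith)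
    have huw : ‖u • w‖ ≤ h * ‖w‖ := by
      rw [norm_smul, Real.norm_of_nonneg hu₀.le]; gcongr
    have hvw : ‖v + u • w‖ ≤ ‖v‖ + ‖w‖ :=
      (norm_add_le _ _).trans (by nlinarith [norm_nonneg v, norm_nonneg w])
    calc ‖NormedSpace.exp ((h - u) • A) *ᵥ (v + u • w) - v‖
        = ‖(NormedSpace.exp ((h - u) • A) - 1) *ᵥ (v + u • w) + u • w‖ := by
          rw [sub_mulVec, one_mulVec]; abel_nf
      _ ≤ Fintype.card n * ‖NormedSpace.exp ((h - u) • A) - 1‖ * ‖v + u • w‖ + h * ‖w‖ :=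
          (norm_add_le _ _).trans (add_le_add (norm_mulVec_le_card_mul _ _) huw)
      _ ≤ Fintype.card n * (c₀ * h) * (‖v‖ + ‖w‖) + h * (‖v‖ + ‖w‖) := by
          gcongr
          exact le_add_of_nonneg_left (norm_nonneg v)
      _ = (Fintype.card n * c₀ + 1) * h * (‖v‖ + ‖w‖) := by ring
  rw [sub_zero] at key
  linarith

theorem exists_norm_sub_exp_mul_add_integral_le {M : ℝ} (hM : 0 ≤ M) :
    ∃ c, 0 ≤ c ∧ ∀ A : Matrix n n ℝ, ‖A‖ ≤ M → ∀ h, 0 ≤ h → h ≤ 1 → ∀ C X₀ X₁ Y : Matrix n p ℝ,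
      ‖X₁ - (NormedSpace.exp (h • A) * Y + ∫ u in (0 : ℝ)..h, NormedSpace.exp ((h - u) • A) * C)‖ ≤
        (1 + c * h) * ‖X₀ - Y‖ + ‖X₁ - X₀ - h • (A * X₀ + C)‖ + c * h ^ 2 * (‖X₀‖ + ‖C‖) := by
  obtain ⟨c₀, hc₀, hexp⟩ := exists_norm_exp_smul_sub_le (n := n) hM
  set κ : ℝ := (Fintype.card n : ℝ)
  refine ⟨κ * c₀, by positivity, fun A hA h h₀ h₁ C X₀ X₁ Y => ?_⟩
  set E := NormedSpace.exp (h • A)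
  set I := ∫ u in (0 : ℝ)..h, NormedSpace.exp ((h - u) • A) * C
  have hcont : Continuous fun u => NormedSpace.exp ((h - u) • A) * C :=
    (continuous_exp_sub_smul A h).matrix_mul continuous_const
  have hint : IntervalIntegrable (fun u => NormedSpace.exp ((h - u) • A) * C)
      MeasureTheory.volume 0 h :=
    hcont.intervalIntegrable _ _
  have hI : ‖I - h • C‖ ≤ κ * c₀ * h ^ 2 * ‖C‖ := by
    have key := norm_integral_sub_smul_le h₀ hint (c := C) (ε := κ * c₀ * h * ‖C‖)
      fun u hu => by
      obtain ⟨hu₀, hu₁⟩ := hu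
      have hE : ‖NormedSpace.exp ((h - u) • A) - 1‖ ≤ c₀ * h :=
        (hexp A hA (h - u) (by linarith) (by linarith)).1.trans (by nlinarith)
      calc ‖NormedSpace.exp ((h - u) • A) * C - C‖
          = ‖(NormedSpace.exp ((h - u) • A) - 1) * C‖ := by rw [Matrix.sub_mul, Matrix.one_mul]
        _ ≤ κ * (c₀ * h) * ‖C‖ := norm_mul_le_card_mul_of_le hE le_rfl
        _ = κ * c₀ * h * ‖C‖ := by ring
    rw [sub_zero] at key
    linarith
  have hE₁ : ‖(E - 1) * (X₀ - Y)‖ ≤ κ * (c₀ * h) * ‖X₀ - Y‖ :=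
    norm_mul_le_card_mul_of_le (hexp A hA h h₀ h₁).1 le_rfl
  have hE₂ : ‖(E - 1 - h • A) * X₀‖ ≤ κ * (c₀ * h ^ 2) * ‖X₀‖ :=
    norm_mul_le_card_mul_of_le (hexp A hA h h₀ h₁).2 le_rfl
  have hsplit : X₁ - (E * Y + I) = (X₀ - Y) + (E - 1) * (X₀ - Y) +
      (X₁ - X₀ - h • (A * X₀ + C)) - (E - 1 - h • A) * X₀ - (I - h • C) := by
    simp only [Matrix.sub_mul, Matrix.mul_sub, Matrix.one_mul, Matrix.smul_mul, smul_add]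
    abel
  rw [hsplit]
  refine (norm_sub_le_of_le (norm_sub_le_of_le norm_add₃_le hE₂) hI).trans ?_
  linarith

end LocalLinearizationStep

end Matrix

structure IsPartition (t : ℕ → ℝ) (N : ℕ) (a b : ℝ) : Prop where
  zero : t 0 = a
  last : t N = b
  lt : ∀ n < N, t n < t (n + 1)

namespace IsPartition

variable {t : ℕ → ℝ} {N : ℕ} {a b : ℝ}

theorem monotone (P : IsPartition t N a b) {m n : ℕ} (hmn : m ≤ n) (hn : n ≤ N) : t m ≤ t n := by
  induction n, hmn using Nat.le_induction with
  | base => exact le_rfl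
  | succ n _ ih => exact (ih (by omega)).trans (P.lt n (by omega)).le

theorem mem_Icc (P : IsPartition t N a b) {n : ℕ} (hn : n ≤ N) : t n ∈ Icc a b :=
  ⟨P.zero ▸ P.monotone (Nat.zero_le n) hn, P.last ▸ P.monotone hn le_rfl⟩

theorem discrete_gronwall (P : IsPartition t N a b) {e : ℕ → ℝ} {L K : ℝ} (hL : 0 ≤ L)
    (hK : 0 ≤ K) (he₀ : e 0 ≤ 0)
    (he : ∀ n < N, e (n + 1) ≤ (1 + L * (t (n + 1) - t n)) * e n + K * (t (n + 1) - t n)) :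
    ∀ n ≤ N, e n ≤ K * (b - a) * Real.exp (L * (b - a)) := by
  have key : ∀ n ≤ N, e n ≤ K * (t n - a) * Real.exp (L * (t n - a)) := by
    intro n hn
    induction n with
    | zero => simpa [P.zero] using he₀
    | succ n ih =>
      have hs : 0 ≤ t n - a := sub_nonneg.2 (P.mem_Icc (by omega)).1
      set h := t (n + 1) - t n
      have hh : 0 ≤ h := sub_nonneg.2 (P.lt n hn).le
      set bound := K * (t n - a) * Real.exp (L * (t n - a))
      have hexp : 1 + L * h ≤ Real.exp (L * h) := by linarith [Real.add_one_le_exp (L * h)]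
      have hgrowth : 1 ≤ Real.exp (L * (t n - a)) * Real.exp (L * h) :=
        one_le_mul_of_one_le_of_one_le (Real.one_le_exp (by positivity))
          (Real.one_le_exp (by positivity))
      calc e (n + 1) ≤ (1 + L * h) * e n + K * h := he n hn
        _ ≤ (1 + L * h) * bound + K * h := by gcongr; exact ih (by omega)
        _ ≤ Real.exp (L * h) * bound + K * h := by gcongr
        _ ≤ K * (t (n + 1) - a) * Real.exp (L * (t (n + 1) - a)) := by
            rw [show t (n + 1) - a = (t n - a) + h by ring, mul_add L, Real.exp_add]
            nlinarith [mul_le_mul_of_nonneg_left hgrowth (mul_nonneg hK hh)]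
  intro n hn
  obtain ⟨han, hnb⟩ := P.mem_Icc hn
  have : 0 ≤ t n - a := sub_nonneg.2 han
  refine (key n hn).trans ?_
  gcongr
  exact mul_nonneg hK (by linarith)

end IsPartition

namespace LocalLinearization

variable {d p : ℕ}

noncomputable def jacobian (f : ℝ → (Fin d → ℝ) → Fin d → ℝ) (t : ℝ) (y : Fin d → ℝ) :
    Matrix (Fin d) (Fin d) ℝ :=
  LinearMap.toMatrix' (↑(fderiv ℝ (f t) y) : (Fin d → ℝ) →ₗ[ℝ] Fin d → ℝ)

noncomputable def step (f : ℝ → (Fin d → ℝ) → Fin d → ℝ) (t : ℝ) (y : Fin d → ℝ) (h : ℝ) :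
    Fin d → ℝ :=
  y + ∫ u in (0 : ℝ)..h, (NormedSpace.exp ((h - u) • jacobian f t y)).mulVec
    (f t y + u • deriv (fun τ' => f τ' y) t)

noncomputable def varStep (f : ℝ → (Fin d → ℝ) → Fin d → ℝ)
    (B : ℝ → (Fin d → ℝ) → Matrix (Fin d) (Fin p) ℝ) (t : ℝ) (y : Fin d → ℝ) (h : ℝ)
    (Y : Matrix (Fin d) (Fin p) ℝ) : Matrix (Fin d) (Fin p) ℝ :=
  NormedSpace.exp (h • jacobian f t y) * Y +
    ∫ u in (0 : ℝ)..h, NormedSpace.exp ((h - u) • jacobian f t y) * B t y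

variable {f : ℝ → (Fin d → ℝ) → Fin d → ℝ} {B : ℝ → (Fin d → ℝ) → Matrix (Fin d) (Fin p) ℝ}
  {M : ℝ} {x : ℝ → Fin d → ℝ} {X : ℝ → Matrix (Fin d) (Fin p) ℝ} {a b : ℝ}

theorem norm_jacobian_le (hf : Differentiable ℝ (Function.uncurry f))
    (hM : ∀ q, ‖fderiv ℝ (Function.uncurry f) q‖ ≤ M) (t : ℝ) (y : Fin d → ℝ) :
    ‖jacobian f t y‖ ≤ M :=
  (LinearMap.norm_toMatrix'_le _).trans (norm_fderiv_apply_le hf hM t y)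

theorem norm_jacobian_sub_le (hf : ContDiff ℝ 2 (Function.uncurry f))
    (hM : ∀ q, ‖fderiv ℝ (fderiv ℝ (Function.uncurry f)) q‖ ≤ M) (t t' : ℝ) (y y' : Fin d → ℝ) :
    ‖jacobian f t y - jacobian f t' y'‖ ≤ M * ‖(t, y) - (t', y')‖ := by
  rw [jacobian, jacobian, ← map_sub, ← ContinuousLinearMap.toLinearMap_sub]
  exact (LinearMap.norm_toMatrix'_le _).trans (norm_fderiv_apply_sub_le hf hM t t' y y')

theorem exists_norm_step_sub_euler_le (hf : Differentiable ℝ (Function.uncurry f))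
    (hf₀ : ∀ q, ‖Function.uncurry f q‖ ≤ M) (hf₁ : ∀ q, ‖fderiv ℝ (Function.uncurry f) q‖ ≤ M) :
    ∃ c, 0 ≤ c ∧ ∀ t y h, 0 ≤ h → h ≤ 1 → ‖step f t y h - y - h • f t y‖ ≤ c * h ^ 2 := by
  have hM : 0 ≤ M := (norm_nonneg _).trans (hf₀ 0)
  obtain ⟨c, hc₀, hc⟩ := Matrix.exists_norm_integral_exp_mulVec_sub_le (n := Fin d) hM
  refine ⟨c * (M + M), by positivity, fun t y h h₀ h₁ => ?_⟩
  rw [step, add_sub_cancel_left]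
  calc _ ≤ c * h ^ 2 * (‖f t y‖ + ‖deriv (fun s => f s y) t‖) :=
        hc _ (norm_jacobian_le hf hf₁ t y) h h₀ h₁ _ _
    _ ≤ c * h ^ 2 * (M + M) := by gcongr; exacts [hf₀ (t, y), norm_deriv_apply_le hf hf₁ t y]
    _ = c * (M + M) * h ^ 2 := by ring

theorem norm_prodMk_solution_sub_le (hf₀ : ∀ q, ‖Function.uncurry f q‖ ≤ M)
    (hx : ∀ u ∈ Icc a b, HasDerivAt x (f u (x u)) u) {s u : ℝ} (hs : s ∈ Icc a b)
    (hu : u ∈ Icc a b) (hsu : s ≤ u) (y : Fin d → ℝ) :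
    ‖(u, x u) - (s, y)‖ ≤ (1 + M) * (u - s) + ‖x s - y‖ := by
  have hxu : ‖x u - x s‖ ≤ M * (u - s) :=
    norm_sub_le_of_hasDerivAt_of_norm_le hx (fun v _ => hf₀ (v, x v)) hs hu hsu
  calc _ ≤ |u - s| + ‖x u - y‖ := norm_prodMk_sub_prodMk_le _ _ _ _
    _ ≤ (u - s) + (M * (u - s) + ‖x s - y‖) := by
        rw [abs_of_nonneg (sub_nonneg.2 hsu)]
        gcongr
        exact (norm_sub_le_norm_sub_add_norm_sub _ (x s) _).trans (by gcongr)
    _ = (1 + M) * (u - s) + ‖x s - y‖ := by ring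

theorem exists_norm_solution_sub_step_le (hf : Differentiable ℝ (Function.uncurry f))
    (hf₀ : ∀ q, ‖Function.uncurry f q‖ ≤ M) (hf₁ : ∀ q, ‖fderiv ℝ (Function.uncurry f) q‖ ≤ M)
    (hx : ∀ u ∈ Icc a b, HasDerivAt x (f u (x u)) u) :
    ∃ c, 0 ≤ c ∧ ∀ s ∈ Icc a b, ∀ s' ∈ Icc a b, s ≤ s' → s' - s ≤ 1 → ∀ y,
      ‖x s' - step f s y (s' - s)‖ ≤ (1 + M * (s' - s)) * ‖x s - y‖ + c * (s' - s) ^ 2 := by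
  have hM : 0 ≤ M := (norm_nonneg _).trans (hf₀ 0)
  obtain ⟨c, hc₀, hc⟩ := exists_norm_step_sub_euler_le hf hf₀ hf₁
  refine ⟨M * (1 + M) + c, by positivity, fun s hs s' hs' hss' h₁ y => ?_⟩
  set h := s' - s
  have hsub : Icc s s' ⊆ Icc a b := Icc_subset_Icc hs.1 hs'.2
  have hdefect : ‖x s' - x s - h • f s (x s)‖ ≤ M * (1 + M) * h * h :=
    norm_sub_sub_smul_le_of_hasDerivAt hss' (fun u hu => hx u (hsub hu)) fun u hu => by
      calc ‖f u (x u) - f s (x s)‖ ≤ M * ‖(u, x u) - (s, x s)‖ :=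
            norm_sub_le_of_norm_fderiv_le hf hf₁ (u, x u) (s, x s)
        _ ≤ M * ((1 + M) * h) := by
            have hρ := norm_prodMk_solution_sub_le hf₀ hx hs (hsub hu) hu.1 (x s)
            rw [sub_self, norm_zero, add_zero] at hρ
            exact mul_le_mul_of_nonneg_left (hρ.trans (by gcongr; linarith [hu.2])) hM
        _ = M * (1 + M) * h := by ring
  have hlip : ‖f s (x s) - f s y‖ ≤ M * ‖x s - y‖ := by
    simpa using norm_sub_le_of_norm_fderiv_le hf hf₁ (s, x s) (s, y)
  have hsplit : x s' - step f s y h = (x s - y) + (x s' - x s - h • f s (x s)) +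
      h • (f s (x s) - f s y) - (step f s y h - y - h • f s y) := by
    rw [smul_sub]; abel
  have hh : 0 ≤ h := sub_nonneg.2 hss'
  have hsmul : ‖h • (f s (x s) - f s y)‖ ≤ h * (M * ‖x s - y‖) := by
    rw [norm_smul, Real.norm_of_nonneg hh]; gcongr
  rw [hsplit]
  refine (norm_sub_le_of_le norm_add₃_le (hc s y h hh h₁)).trans ?_
  linarith

theorem exists_global_error_le (hab : a ≤ b) (hf : Differentiable ℝ (Function.uncurry f))
    (hf₀ : ∀ q, ‖Function.uncurry f q‖ ≤ M) (hf₁ : ∀ q, ‖fderiv ℝ (Function.uncurry f) q‖ ≤ M)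
    (hx : ∀ u ∈ Icc a b, HasDerivAt x (f u (x u)) u) :
    ∃ C, 0 ≤ C ∧ ∀ h, 0 ≤ h → h ≤ 1 → ∀ N t, IsPartition t N a b →
      (∀ n < N, t (n + 1) - t n ≤ h) → ∀ y : ℕ → Fin d → ℝ, y 0 = x a →
      (∀ n < N, y (n + 1) = step f (t n) (y n) (t (n + 1) - t n)) →
      ∀ n ≤ N, ‖x (t n) - y n‖ ≤ C * h := by
  have hM : 0 ≤ M := (norm_nonneg _).trans (hf₀ 0)
  obtain ⟨c, hc₀, hc⟩ := exists_norm_solution_sub_step_le hf hf₀ hf₁ hx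
  refine ⟨c * (b - a) * Real.exp (M * (b - a)), by have := sub_nonneg.2 hab; positivity,
    fun h h₀ h₁ N t P hmesh y hy₀ hy => ?_⟩
  refine fun n hn => (P.discrete_gronwall (e := fun n => ‖x (t n) - y n‖) hM
    (mul_nonneg hc₀ h₀) (by simp [P.zero, hy₀]) (fun n hn => ?_) n hn).trans_eq (by ring)
  have hstep := (P.lt n hn).le
  have hmesh' : (t (n + 1) - t n) ^ 2 ≤ h * (t (n + 1) - t n) := by
    rw [sq]; gcongr; exact hmesh n hn
  rw [hy n hn]
  refine (hc _ (P.mem_Icc hn.le) _ (P.mem_Icc hn) hstep ((hmesh n hn).trans h₁) _).trans ?_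
  nlinarith [mul_le_mul_of_nonneg_left hmesh' hc₀]

theorem exists_norm_variational_defect_le {MB KX : ℝ} (hf : ContDiff ℝ 2 (Function.uncurry f))
    (hf₀ : ∀ q, ‖Function.uncurry f q‖ ≤ M) (hf₁ : ∀ q, ‖fderiv ℝ (Function.uncurry f) q‖ ≤ M)
    (hf₂ : ∀ q, ‖fderiv ℝ (fderiv ℝ (Function.uncurry f)) q‖ ≤ M)
    (hB : Differentiable ℝ (Function.uncurry B)) (hB₀ : ∀ q, ‖Function.uncurry B q‖ ≤ MB)
    (hB₁ : ∀ q, ‖fderiv ℝ (Function.uncurry B) q‖ ≤ MB)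
    (hx : ∀ u ∈ Icc a b, HasDerivAt x (f u (x u)) u)
    (hX : ∀ u ∈ Icc a b, HasDerivAt X (jacobian f u (x u) * X u + B u (x u)) u)
    (hKX : 0 ≤ KX) (hXb : ∀ u ∈ Icc a b, ‖X u‖ ≤ KX) :
    ∃ K, 0 ≤ K ∧ ∀ s ∈ Icc a b, ∀ s' ∈ Icc a b, s ≤ s' → ∀ y,
      ‖X s' - X s - (s' - s) • (jacobian f s y * X s + B s y)‖ ≤
        K * (s' - s + ‖x s - y‖) * (s' - s) := by
  have hM : 0 ≤ M := (norm_nonneg _).trans (hf₀ 0)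
  have hMB : 0 ≤ MB := (norm_nonneg _).trans (hB₀ 0)
  have hJ := norm_jacobian_le (hf.differentiable (by norm_num)) hf₁
  set κ : ℝ := (Fintype.card (Fin d) : ℝ)
  set LX := κ * M * KX + MB
  have hXlip : ∀ u ∈ Icc a b, ‖jacobian f u (x u) * X u + B u (x u)‖ ≤ LX := fun u hu =>
    (norm_add_le _ _).trans <| add_le_add
      (Matrix.norm_mul_le_card_mul_of_le (hJ _ _) (hXb u hu)) (hB₀ (u, x u))
  set K := κ * M * KX * (1 + M) + κ * M * LX + MB * (1 + M)
  refine ⟨K, by positivity, fun s hs s' hs' hss' y => ?_⟩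
  set δ := ‖x s - y‖
  have hsub : Icc s s' ⊆ Icc a b := Icc_subset_Icc hs.1 hs'.2
  refine (norm_sub_sub_smul_le_of_hasDerivAt hss' (fun u hu => hX u (hsub hu))
    (ε := K * (s' - s + δ)) fun u hu => ?_).trans_eq (by ring)
  have hρ : ‖(u, x u) - (s, y)‖ ≤ (1 + M) * (s' - s + δ) :=
    (norm_prodMk_solution_sub_le hf₀ hx hs (hsub hu) hu.1 y).trans
      (by nlinarith [hu.2, norm_nonneg (x s - y)])
  have hXu : ‖X u - X s‖ ≤ LX * (s' - s) :=
    (norm_sub_le_of_hasDerivAt_of_norm_le hX hXlip hs (hsub hu) hu.1).trans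
      (mul_le_mul_of_nonneg_left (by linarith [hu.2]) (by positivity))
  have e₁ : ‖(jacobian f u (x u) - jacobian f s y) * X u‖ ≤
      κ * (M * ((1 + M) * (s' - s + δ))) * KX :=
    Matrix.norm_mul_le_card_mul_of_le ((norm_jacobian_sub_le hf hf₂ _ _ _ _).trans (by gcongr))
      (hXb u (hsub hu))
  have e₂ : ‖jacobian f s y * (X u - X s)‖ ≤ κ * M * (LX * (s' - s)) :=
    Matrix.norm_mul_le_card_mul_of_le (hJ _ _) hXu
  have e₃ : ‖B u (x u) - B s y‖ ≤ MB * ((1 + M) * (s' - s + δ)) :=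
    (norm_sub_le_of_norm_fderiv_le hB hB₁ (u, x u) (s, y)).trans (by gcongr)
  have hsplit : jacobian f u (x u) * X u + B u (x u) - (jacobian f s y * X s + B s y) =
      (jacobian f u (x u) - jacobian f s y) * X u + jacobian f s y * (X u - X s) +
        (B u (x u) - B s y) := by
    simp only [Matrix.sub_mul, Matrix.mul_sub]; abel
  have hK : K * (s' - s + δ) = κ * (M * ((1 + M) * (s' - s + δ))) * KX +
      κ * M * (LX * (s' - s)) + κ * M * LX * δ + MB * ((1 + M) * (s' - s + δ)) := by ring
  have hLXδ : 0 ≤ κ * M * LX * δ := by positivity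
  rw [hsplit, hK]
  linarith [norm_add₃_le (a := (jacobian f u (x u) - jacobian f s y) * X u)
    (b := jacobian f s y * (X u - X s)) (c := B u (x u) - B s y)]

theorem exists_norm_variational_sub_varStep_le {MB : ℝ}
    (hf : ContDiff ℝ 2 (Function.uncurry f))
    (hf₀ : ∀ q, ‖Function.uncurry f q‖ ≤ M) (hf₁ : ∀ q, ‖fderiv ℝ (Function.uncurry f) q‖ ≤ M)
    (hf₂ : ∀ q, ‖fderiv ℝ (fderiv ℝ (Function.uncurry f)) q‖ ≤ M)
    (hB : Differentiable ℝ (Function.uncurry B)) (hB₀ : ∀ q, ‖Function.uncurry B q‖ ≤ MB)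
    (hB₁ : ∀ q, ‖fderiv ℝ (Function.uncurry B) q‖ ≤ MB)
    (hx : ∀ u ∈ Icc a b, HasDerivAt x (f u (x u)) u)
    (hX : ∀ u ∈ Icc a b, HasDerivAt X (jacobian f u (x u) * X u + B u (x u)) u) :
    ∃ c, 0 ≤ c ∧ ∀ s ∈ Icc a b, ∀ s' ∈ Icc a b, s ≤ s' → s' - s ≤ 1 → ∀ y Y,
      ‖X s' - varStep f B s y (s' - s) Y‖ ≤
        (1 + c * (s' - s)) * ‖X s - Y‖ + c * (s' - s + ‖x s - y‖) * (s' - s) := by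
  have hM : 0 ≤ M := (norm_nonneg _).trans (hf₀ 0)
  have hMB : 0 ≤ MB := (norm_nonneg _).trans (hB₀ 0)
  obtain ⟨KX₀, hKX₀⟩ := isCompact_Icc.exists_bound_of_continuousOn
    fun u hu => (hX u hu).continuousAt.continuousWithinAt
  set KX := max KX₀ 0
  have hXb : ∀ u ∈ Icc a b, ‖X u‖ ≤ KX := fun u hu => (hKX₀ u hu).trans (le_max_left _ _)
  obtain ⟨K, hK₀, hK⟩ := exists_norm_variational_defect_le hf hf₀ hf₁ hf₂ hB hB₀ hB₁ hx hX
    (le_max_right _ _) hXb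
  obtain ⟨c₀, hc₀, hc⟩ :=
    Matrix.exists_norm_sub_exp_mul_add_integral_le (n := Fin d) (p := Fin p) hM
  refine ⟨c₀ + K + c₀ * (KX + MB), by positivity, fun s hs s' hs' hss' h₁ y Y => ?_⟩
  set h := s' - s
  set δ := ‖x s - y‖
  have hh : 0 ≤ h := sub_nonneg.2 hss'
  have hstep := hc _ (norm_jacobian_le (hf.differentiable (by norm_num)) hf₁ s y) h hh h₁
    (B s y) (X s) (X s') Y
  have hdefect := hK s hs s' hs' hss' y
  have hcontract : (1 + c₀ * h) * ‖X s - Y‖ ≤ (1 + (c₀ + K + c₀ * (KX + MB)) * h) * ‖X s - Y‖ := by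
    have : 0 ≤ c₀ * (KX + MB) := by positivity
    gcongr
    linarith
  have hremainder : c₀ * h ^ 2 * (‖X s‖ + ‖B s y‖) ≤ c₀ * (KX + MB) * (h + δ) * h :=
    calc c₀ * h ^ 2 * (‖X s‖ + ‖B s y‖) ≤ c₀ * ((h + δ) * h) * (KX + MB) := by
          gcongr
          · nlinarith [norm_nonneg (x s - y)]
          · exact hXb s hs
          · exact hB₀ (s, y)
      _ = c₀ * (KX + MB) * (h + δ) * h := by ring
  have hδ : 0 ≤ c₀ * (h + δ) * h := by positivity
  rw [varStep]
  linarith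

theorem exists_variational_global_error_le {MB C₁ : ℝ} (hf : ContDiff ℝ 2 (Function.uncurry f))
    (hf₀ : ∀ q, ‖Function.uncurry f q‖ ≤ M) (hf₁ : ∀ q, ‖fderiv ℝ (Function.uncurry f) q‖ ≤ M)
    (hf₂ : ∀ q, ‖fderiv ℝ (fderiv ℝ (Function.uncurry f)) q‖ ≤ M)
    (hB : Differentiable ℝ (Function.uncurry B)) (hB₀ : ∀ q, ‖Function.uncurry B q‖ ≤ MB)
    (hB₁ : ∀ q, ‖fderiv ℝ (Function.uncurry B) q‖ ≤ MB)
    (hx : ∀ u ∈ Icc a b, HasDerivAt x (f u (x u)) u)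
    (hX : ∀ u ∈ Icc a b, HasDerivAt X (jacobian f u (x u) * X u + B u (x u)) u) (hC₁ : 0 ≤ C₁) :
    ∃ C, ∀ h, 0 ≤ h → h ≤ 1 → ∀ N t, IsPartition t N a b → (∀ n < N, t (n + 1) - t n ≤ h) →
      ∀ y : ℕ → Fin d → ℝ, (∀ n ≤ N, ‖x (t n) - y n‖ ≤ C₁ * h) →
      ∀ Y : ℕ → Matrix (Fin d) (Fin p) ℝ, Y 0 = X a →
      (∀ n < N, Y (n + 1) = varStep f B (t n) (y n) (t (n + 1) - t n) (Y n)) →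
      ∀ n ≤ N, ‖X (t n) - Y n‖ ≤ C * h := by
  obtain ⟨c, hc₀, hc⟩ :=
    exists_norm_variational_sub_varStep_le hf hf₀ hf₁ hf₂ hB hB₀ hB₁ hx hX
  refine ⟨c * (1 + C₁) * (b - a) * Real.exp (c * (b - a)),
    fun h h₀ h₁ N t P hmesh y hy Y hY₀ hY => ?_⟩
  refine fun n hn => (P.discrete_gronwall (e := fun n => ‖X (t n) - Y n‖)
    (K := c * (1 + C₁) * h) hc₀ (by positivity) (by simp [P.zero, hY₀]) (fun n hn => ?_)
    n hn).trans_eq (by ring)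
  have hδ : t (n + 1) - t n + ‖x (t n) - y n‖ ≤ (1 + C₁) * h := by
    linarith [hy n hn.le, hmesh n hn]
  rw [hY n hn]
  refine (hc _ (P.mem_Icc hn.le) (t (n + 1)) (P.mem_Icc hn) (P.lt n hn).le
    ((hmesh n hn).trans h₁) _ _).trans (add_le_add le_rfl ?_)
  rw [mul_assoc c (1 + C₁)]
  exact mul_le_mul_of_nonneg_right (mul_le_mul_of_nonneg_left hδ hc₀)
    (sub_nonneg.2 (P.lt n hn).le)

end LocalLinearization

theorem local_linearization_variational_parameter_convergence_general
    (d p : ℕ)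
    (f : ℝ → (Fin d → ℝ) → Fin d → ℝ)
    (hf : ContDiff ℝ 2 (Function.uncurry f))
    (hbound : ∃ M : ℝ, ∀ q : ℝ × (Fin d → ℝ),
        ‖Function.uncurry f q‖ ≤ M ∧
        ‖fderiv ℝ (Function.uncurry f) q‖ ≤ M ∧
        ‖fderiv ℝ (fderiv ℝ (Function.uncurry f)) q‖ ≤ M)
    (B : ℝ → (Fin d → ℝ) → Matrix (Fin d) (Fin p) ℝ)
    (hB : ContDiff ℝ 1 (Function.uncurry B))
    (hBbound : ∃ MB : ℝ, ∀ q : ℝ × (Fin d → ℝ),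
        ‖Function.uncurry B q‖ ≤ MB ∧ ‖fderiv ℝ (Function.uncurry B) q‖ ≤ MB)
    (τ T : ℝ) (hT : 0 < T) (s : Fin d → ℝ)
    (x : ℝ → Fin d → ℝ) (hx₀ : x τ = s)
    (hx : ∀ t ∈ Set.Icc τ (τ + T), HasDerivAt x (f t (x t)) t)
    (X : ℝ → Matrix (Fin d) (Fin p) ℝ)
    (hX₀ : X τ = 0)
    (hX : ∀ t ∈ Set.Icc τ (τ + T), HasDerivAt X
        ((LinearMap.toMatrix' (↑(fderiv ℝ (f t) (x t)) :
            (Fin d → ℝ) →ₗ[ℝ] Fin d → ℝ)) * X t + B t (x t)) t) :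
    ∃ C > (0 : ℝ), ∃ h₀ > (0 : ℝ), ∀ h : ℝ, h ≤ h₀ →
      ∀ N : ℕ, 0 < N → ∀ t : ℕ → ℝ,
        t 0 = τ → t N = τ + T →
        (∀ n < N, t n < t (n + 1)) →
        (∀ n < N, t (n + 1) - t n ≤ h) →
        ∀ y : ℕ → Fin d → ℝ, y 0 = s →
        (∀ n < N, y (n + 1) = y n + ∫ u in (0 : ℝ)..(t (n + 1) - t n),
            (NormedSpace.exp ((t (n + 1) - t n - u) •
                LinearMap.toMatrix' (↑(fderiv ℝ (f (t n)) (y n)) :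
                  (Fin d → ℝ) →ₗ[ℝ] Fin d → ℝ))).mulVec
              (f (t n) (y n) + u • deriv (fun τ' => f τ' (y n)) (t n))) →
        ∀ Y : ℕ → Matrix (Fin d) (Fin p) ℝ, Y 0 = 0 →
        (∀ n < N, Y (n + 1) = NormedSpace.exp ((t (n + 1) - t n) •
            LinearMap.toMatrix' (↑(fderiv ℝ (f (t n)) (y n)) :
              (Fin d → ℝ) →ₗ[ℝ] Fin d → ℝ)) * Y n +
          ∫ u in (0 : ℝ)..(t (n + 1) - t n),
            NormedSpace.exp ((t (n + 1) - t n - u) •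
              LinearMap.toMatrix' (↑(fderiv ℝ (f (t n)) (y n)) :
                (Fin d → ℝ) →ₗ[ℝ] Fin d → ℝ)) * B (t n) (y n)) →
        ∀ n ≤ N, ‖X (t n) - Y n‖ ≤ C * h := by
  obtain ⟨M, hM⟩ := hbound
  obtain ⟨MB, hMB⟩ := hBbound
  have hf₁ : Differentiable ℝ (Function.uncurry f) := hf.differentiable (by norm_num)
  obtain ⟨C₁, hC₁, hstate⟩ := LocalLinearization.exists_global_error_le
    (le_add_of_nonneg_right hT.le) hf₁ (fun q => (hM q).1) (fun q => (hM q).2.1) hx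
  obtain ⟨C, hvar⟩ := LocalLinearization.exists_variational_global_error_le hf (fun q => (hM q).1)
    (fun q => (hM q).2.1) (fun q => (hM q).2.2) (hB.differentiable one_ne_zero) (fun q => (hMB q).1)
    (fun q => (hMB q).2) hx hX hC₁
  refine ⟨max C 1, by positivity, 1, one_pos,
    fun h h₁ N hN t ht₀ htN hlt hmesh y hy₀ hy Y hY₀ hY n hn => ?_⟩
  have P : IsPartition t N τ (τ + T) := ⟨ht₀, htN, hlt⟩
  have h₀ : 0 < h := (sub_pos.2 (hlt 0 hN)).trans_le (hmesh 0 hN)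
  have hxy := hstate h h₀.le h₁ N t P hmesh y (hy₀.trans hx₀.symm) hy
  refine (hvar h h₀.le h₁ N t P hmesh y hxy Y (hY₀.trans hX₀.symm) hY n hn).trans ?_
  exact mul_le_mul_of_nonneg_right (le_max_left _ _) h₀.le

/-- First-order convergence of the Local Linearization approximation to the
variational equation with respect to the parameters: with
`X′(t) = D_x f(t, x(t))·X(t) + B(t, x(t))`, `X(τ) = 0`, and the LL
discretization `Y₀ = 0`, `Y_{n+1} = exp(hₙAₙ)Yₙ + ∫₀^{hₙ} exp((hₙ−u)Aₙ)·Bₙ du`,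
one has `max_n ‖X(tₙ) − Yₙ‖ ≤ C·h`. -/
theorem local_linearization_variational_parameter_convergence
    (d p : ℕ) (hd : 0 < d) (hp : 0 < p)
    (f : ℝ → (Fin d → ℝ) → Fin d → ℝ)
    (hf : ContDiff ℝ 2 (Function.uncurry f))
    (hbound : ∃ M : ℝ, ∀ q : ℝ × (Fin d → ℝ),
        ‖Function.uncurry f q‖ ≤ M ∧
        ‖fderiv ℝ (Function.uncurry f) q‖ ≤ M ∧
        ‖fderiv ℝ (fderiv ℝ (Function.uncurry f)) q‖ ≤ M)
    (B : ℝ → (Fin d → ℝ) → Matrix (Fin d) (Fin p) ℝ)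
    (hB : ContDiff ℝ 1 (Function.uncurry B))
    (hBbound : ∃ MB : ℝ, ∀ q : ℝ × (Fin d → ℝ),
        ‖Function.uncurry B q‖ ≤ MB ∧ ‖fderiv ℝ (Function.uncurry B) q‖ ≤ MB)
    (τ T : ℝ) (hT : 0 < T) (s : Fin d → ℝ)
    (x : ℝ → Fin d → ℝ) (hx₀ : x τ = s)
    (hx : ∀ t ∈ Set.Icc τ (τ + T), HasDerivAt x (f t (x t)) t)
    (X : ℝ → Matrix (Fin d) (Fin p) ℝ)
    (hX₀ : X τ = 0)
    (hX : ∀ t ∈ Set.Icc τ (τ + T), HasDerivAt X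
        ((LinearMap.toMatrix' (↑(fderiv ℝ (f t) (x t)) :
            (Fin d → ℝ) →ₗ[ℝ] Fin d → ℝ)) * X t + B t (x t)) t) :
    ∃ C > (0 : ℝ), ∃ h₀ > (0 : ℝ), ∀ h : ℝ, h ≤ h₀ →
      ∀ N : ℕ, 0 < N → ∀ t : ℕ → ℝ,
        t 0 = τ → t N = τ + T →
        (∀ n < N, t n < t (n + 1)) →
        (∀ n < N, t (n + 1) - t n ≤ h) →
        ∀ y : ℕ → Fin d → ℝ, y 0 = s →
        (∀ n < N, y (n + 1) = y n + ∫ u in (0 : ℝ)..(t (n + 1) - t n),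
            (NormedSpace.exp ((t (n + 1) - t n - u) •
                LinearMap.toMatrix' (↑(fderiv ℝ (f (t n)) (y n)) :
                  (Fin d → ℝ) →ₗ[ℝ] Fin d → ℝ))).mulVec
              (f (t n) (y n) + u • deriv (fun τ' => f τ' (y n)) (t n))) →
        ∀ Y : ℕ → Matrix (Fin d) (Fin p) ℝ, Y 0 = 0 →
        (∀ n < N, Y (n + 1) = NormedSpace.exp ((t (n + 1) - t n) •
            LinearMap.toMatrix' (↑(fderiv ℝ (f (t n)) (y n)) :
              (Fin d → ℝ) →ₗ[ℝ] Fin d → ℝ)) * Y n +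
          ∫ u in (0 : ℝ)..(t (n + 1) - t n),
            NormedSpace.exp ((t (n + 1) - t n - u) •
              LinearMap.toMatrix' (↑(fderiv ℝ (f (t n)) (y n)) :
                (Fin d → ℝ) →ₗ[ℝ] Fin d → ℝ)) * B (t n) (y n)) →
        ∀ n ≤ N, ‖X (t n) - Y n‖ ≤ C * h :=
  local_linearization_variational_parameter_convergence_general d p f hf hbound B hB hBbound τ T hT
    s x hx₀ hx X hX₀ hX
end

section
/- Equivalence of the condensed problem: if the increments satisfy the forward recursion Δs_{i+1} = D_i·Δs_i + E_i·Δp + c_i for i = 0, ..., m−1, then F₁ + Σ_{k=0}^{m} A_k·Δs_k + P·Δp = U⁽⁰⁾ + S⁽⁰⁾·Δs₀ + P⁽⁰⁾·Δp; i.e., the linearized residual expressed in all variables (Δs₀, ..., Δs_m, Δp) equals the condensed residual in the variables (Δs₀, Δp) only. -/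
/-- Equivalence of the condensed problem: under the backward condensing
recursion and the forward recursion for the increments, the linearized residual
in all variables `(Δs₀, ..., Δs_m, Δp)` equals the condensed residual in the
variables `(Δs₀, Δp)` only. -/
theorem condensed_problem_equivalence
    (d q m M : ℕ) (hd : 0 < d) (hq : 0 < q) (hm : 0 < m) (hM : 0 < M)
    (F₁ : Fin M → ℝ)
    (A : ℕ → Matrix (Fin M) (Fin d) ℝ)
    (Pb : Matrix (Fin M) (Fin q) ℝ)
    (D : ℕ → Matrix (Fin d) (Fin d) ℝ)
    (E : ℕ → Matrix (Fin d) (Fin q) ℝ)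
    (c : ℕ → Fin d → ℝ)
    (U : ℕ → Fin M → ℝ)
    (Pr : ℕ → Matrix (Fin M) (Fin q) ℝ)
    (S : ℕ → Matrix (Fin M) (Fin d) ℝ)
    (hUm : U m = F₁) (hPm : Pr m = Pb) (hSm : S m = A m)
    (hU : ∀ i < m, U i = U (i + 1) + (S (i + 1)).mulVec (c i))
    (hP : ∀ i < m, Pr i = Pr (i + 1) + S (i + 1) * E i)
    (hS : ∀ i < m, S i = A i + S (i + 1) * D i)
    (Δs : ℕ → Fin d → ℝ) (Δp : Fin q → ℝ)
    (hforward : ∀ i < m,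
      Δs (i + 1) = (D i).mulVec (Δs i) + (E i).mulVec Δp + c i) :
    F₁ + (∑ k ∈ Finset.range (m + 1), (A k).mulVec (Δs k)) + Pb.mulVec Δp =
      U 0 + (S 0).mulVec (Δs 0) + (Pr 0).mulVec Δp := by
  have key : ∀ t, ∀ j, j + t = m →
      U j + (S j).mulVec (Δs j) + (Pr j).mulVec Δp =
        F₁ + (∑ k ∈ Finset.Icc j m, (A k).mulVec (Δs k)) + Pb.mulVec Δp := by
    intro t
    induction t with
    | zero =>
      intro j hj
      simp only [Nat.add_zero] at hj
      subst hj
      rw [hUm, hPm, hSm, Finset.Icc_self, Finset.sum_singleton]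
    | succ n ih =>
      intro j hj
      have hjm : j < m := by omega
      have hins : Finset.Icc j m = insert j (Finset.Icc (j + 1) m) := by
        ext x; simp [Finset.mem_Icc, Finset.mem_insert]; omega
      rw [hU j hjm, hP j hjm, hS j hjm, hins,
        Finset.sum_insert (by simp [Finset.mem_Icc])]
      have hnext := ih (j + 1) (by omega)
      rw [Matrix.add_mulVec, Matrix.add_mulVec, ← Matrix.mulVec_mulVec,
        ← Matrix.mulVec_mulVec]
      have hΔ : (S (j + 1)).mulVec (c j) + (S (j + 1)).mulVec ((D j).mulVec (Δs j))
          + (S (j + 1)).mulVec ((E j).mulVec Δp)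
          = (S (j + 1)).mulVec (Δs (j + 1)) := by
        rw [hforward j hjm, Matrix.mulVec_add, Matrix.mulVec_add]
        abel
      calc U (j + 1) + (S (j + 1)).mulVec (c j)
            + ((A j).mulVec (Δs j) + (S (j + 1)).mulVec ((D j).mulVec (Δs j)))
            + ((Pr (j + 1)).mulVec Δp + (S (j + 1)).mulVec ((E j).mulVec Δp))
          = (U (j + 1) + (S (j + 1)).mulVec (Δs (j + 1)) + (Pr (j + 1)).mulVec Δp)
            + (A j).mulVec (Δs j) := by rw [← hΔ]; abel
        _ = F₁ + ((A j).mulVec (Δs j)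
            + ∑ k ∈ Finset.Icc (j + 1) m, (A k).mulVec (Δs k)) + Pb.mulVec Δp := by
            rw [hnext]; abel
  have h0 := key m 0 (by omega)
  rw [h0]
  congr 2
  apply Finset.sum_congr _ (fun _ _ => rfl)
  ext x; simp [Finset.mem_Icc]
end
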